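/- arXiv:1709.00589 — 3 statements merged into one kernel-verified Lean document; each statement's English description precedes it below -/
import Mathlib

section
/- Let G be a finite simple graph of diameter 2. Suppose that for every pair of non-adjacent vertices u, v of G, the subgraph induced by Ecc_G(u) ∩ Ecc_G(v) is a disjoint union of complete graphs each on at least two vertices, such that every neighbor outside Ecc_G(u) ∩ Ecc_G(v) of each vertex of these complete subgraphs belongs to N_G(u) ∩ N_G(v). Suppose moreover that it is not the case that G is a 2-SC graph containing a diametrical pair u, v together with vertices u' ∈ N_G(u) \ N_G(v) and v' ∈ N_G(v) \ N_G(u) satisfying N_G(u) ∩ N_G(v) ⊆ Ecc_G(u') ∩ Ecc_G(v'). Then θ_3(G) = 4. -/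
/-!
Upper bound: take `u` of eccentricity 2, hang a pendant vertex `p` at `u`, attach a path
`a - b - c` to `u` through `a`, and join `c` to every vertex at distance 2 from `u`. Then `p` and
`c` are at distance 4 and every other vertex has eccentricity 3.

Lower bound: let `H` be a 3-ASC graph containing `G` induced, with at most three added vertices.
Vertices of `G` are pairwise at distance at most 2 in `H`, so each of them needs an added vertex at
distance at least 3; and since only two vertices are non-central, no vertex has two distinct
vertices at distance greater than 3. Splitting according to which added vertices have a neighbour
in `G` and how the added vertices are joined, these two facts rule out every configuration but two:
three pairwise non-adjacent added vertices all attached to `G`, which produces the 2-SC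
configuration of `NewAddedHyp`, and two attached added vertices with a common unattached neighbour,
which contradicts the structure of `Ecc(u) ∩ Ecc(v)`.
-/

namespace AscPaper

open SimpleGraph

/-- The eccentricity of a vertex `u` in a graph `G`, as an extended natural number:
the supremum of distances from `u` to all vertices. -/
noncomputable def ecc {V : Type*} (G : SimpleGraph V) (u : V) : ℕ∞ :=
  ⨆ v, G.edist u v

/-- The radius of a graph: the minimum eccentricity over all vertices. -/
noncomputable def graphRadius {V : Type*} (G : SimpleGraph V) : ℕ∞ :=
  ⨅ u, ecc G u

/-- The diameter of a graph: the maximum eccentricity over all vertices. -/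
noncomputable def graphDiam {V : Type*} (G : SimpleGraph V) : ℕ∞ :=
  ⨆ u, ecc G u

/-- The eccentric set of `u`: all vertices at distance exactly `ecc G u` from `u`. -/
def eccSet {V : Type*} (G : SimpleGraph V) (u : V) : Set V :=
  {v | G.edist u v = ecc G u}

/-- `H` is an `r`-ASC (almost self-centered) graph: `H` is connected, has radius `r`,
and all but exactly two vertices are central (have eccentricity equal to the radius). -/
def IsASC {V : Type*} (r : ℕ) (H : SimpleGraph V) : Prop :=
  H.Connected ∧ graphRadius H = (r : ℕ∞) ∧
    {u : V | ecc H u ≠ graphRadius H}.ncard = 2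

/-- The `r`-ASC index of a graph `G`: the minimum number `k` of vertices that need to be
added to `G` so that the resulting graph is an `r`-ASC graph containing `G` as an
induced subgraph. -/
noncomputable def theta {V : Type*} (r : ℕ) (G : SimpleGraph V) : ℕ :=
  sInf {k : ℕ | ∃ H : SimpleGraph (V ⊕ Fin k), IsASC r H ∧
    ∀ u v : V, H.Adj (Sum.inl u) (Sum.inl v) ↔ G.Adj u v}

/-- The hypothesis of the paper's Theorem on 2-SC graphs: `G` is a 2-SC graph (every
vertex has eccentricity 2) containing a diametrical pair `u, v` together with vertices
`u' ∈ N(u) \ N(v)` and `v' ∈ N(v) \ N(u)` such that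
`N(u) ∩ N(v) ⊆ Ecc(u') ∩ Ecc(v')`. -/
def NewAddedHyp {V : Type*} (G : SimpleGraph V) : Prop :=
  (∀ u, ecc G u = 2) ∧
  ∃ u v u' v' : V, G.edist u v = graphDiam G ∧
    u' ∈ G.neighborSet u \ G.neighborSet v ∧
    v' ∈ G.neighborSet v \ G.neighborSet u ∧
    G.neighborSet u ∩ G.neighborSet v ⊆ eccSet G u' ∩ eccSet G v'

end AscPaper

lemma Fin.eq_or_eq_or_eq_of_ne {a b c : Fin 3} (hab : a ≠ b) (hac : a ≠ c) (hbc : b ≠ c)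
    (t : Fin 3) : t = a ∨ t = b ∨ t = c := by
  omega

namespace SimpleGraph

variable {W W' : Type*} {H : SimpleGraph W} {u v w : W}

lemma Adj.dist_eq_one (h : H.Adj u v) : H.dist u v = 1 :=
  dist_eq_one_iff_adj.mpr h

lemma edist_map_le {G : SimpleGraph W'} (f : G →g H) (x y : W') :
    H.edist (f x) (f y) ≤ G.edist x y := by
  by_cases hr : G.Reachable x y
  · obtain ⟨p, hp⟩ := hr.exists_walk_length_eq_edist
    rw [← hp, ← p.length_map f]
    exact edist_le _
  · simp [edist_eq_top_of_not_reachable hr]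

namespace Connected

variable (hH : H.Connected)
include hH

lemma exists_adj_dist_add_one_le (hne : u ≠ v) :
    ∃ m, H.Adj u m ∧ H.dist m v + 1 ≤ H.dist u v := by
  obtain ⟨p, hp⟩ := hH.exists_walk_length_eq_dist u v
  cases p with
  | nil => exact absurd rfl hne
  | cons h q => exact ⟨_, h, by simpa [← hp] using dist_le q⟩

lemma le_dist_of_forall_adj {n : ℕ} (hne : u ≠ v) (h : ∀ m, H.Adj u m → n ≤ H.dist m v) :
    n + 1 ≤ H.dist u v := by
  obtain ⟨m, hm, hd⟩ := hH.exists_adj_dist_add_one_le hne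
  have := h m hm
  omega

lemma dist_le_dist_add_one_of_adj (h : H.Adj u v) (w : W) : H.dist u w ≤ H.dist v w + 1 := by
  have := hH.dist_triangle (u := u) (v := v) (w := w)
  rw [h.dist_eq_one] at this
  omega

lemma dist_le_two_of_adj_of_adj (h₁ : H.Adj u v) (h₂ : H.Adj v w) : H.dist u w ≤ 2 := by
  have := hH.dist_le_dist_add_one_of_adj h₁ w
  rw [h₂.dist_eq_one] at this
  exact this

lemma adj_of_dist_le_one (hne : u ≠ v) (h : H.dist u v ≤ 1) : H.Adj u v :=
  dist_eq_one_iff_adj.mp (le_antisymm h (hH.pos_dist_of_ne hne))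

lemma two_le_dist_iff : 2 ≤ H.dist u v ↔ u ≠ v ∧ ¬H.Adj u v := by
  refine ⟨fun h => ⟨?_, fun hadj => ?_⟩, fun h => hH.one_lt_dist_of_ne_of_not_adj h.1 h.2⟩
  · rintro rfl
    simp at h
  · rw [hadj.dist_eq_one] at h
    omega

lemma le_eccent_of_le_dist {n : ℕ} (h : n ≤ H.dist w v) : (n : ℕ∞) ≤ H.eccent w :=
  (Nat.cast_le.mpr h).trans ((hH w v).coe_dist_eq_edist ▸ edist_le_eccent)

lemma eccent_le_iff {n : ℕ} : H.eccent w ≤ n ↔ ∀ w', H.dist w w' ≤ n := by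
  simp only [SimpleGraph.eccent_le_iff, ← (hH w _).coe_dist_eq_edist, Nat.cast_le]

lemma eccent_eq_of_forall_dist_le {n : ℕ} (hle : ∀ w', H.dist w w' ≤ n) (h : n ≤ H.dist w v) :
    H.eccent w = n :=
  le_antisymm (hH.eccent_le_iff.mpr hle) (hH.le_eccent_of_le_dist h)

lemma exists_le_dist_of_le_eccent {n : ℕ} (h : (n : ℕ∞) ≤ H.eccent w) :
    ∃ w', n ≤ H.dist w w' := by
  by_contra! hlt
  have hn : 0 < n := by simpa using hlt w
  have : H.eccent w ≤ (n - 1 : ℕ) := hH.eccent_le_iff.mpr fun w' => by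
    have := hlt w'
    omega
  have : n ≤ n - 1 := by exact_mod_cast h.trans this
  omega

lemma exists_adj_mem_notMem (S : Set W) (hu : u ∈ S) (hv : v ∉ S) :
    ∃ a ∈ S, ∃ b ∉ S, H.Adj a b := by
  obtain ⟨p⟩ := hH u v
  obtain ⟨d, -, hd₁, hd₂⟩ := p.exists_boundary_dart S hu hv
  exact ⟨_, hd₁, _, hd₂, d.adj⟩

end Connected

end SimpleGraph

namespace AscPaper

open SimpleGraph Sum

namespace IsASC

variable {W : Type*} {r : ℕ} {H : SimpleGraph W} (hH : IsASC r H)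
include hH

lemma exists_le_dist (w : W) : ∃ w', r ≤ H.dist w w' :=
  hH.1.exists_le_dist_of_le_eccent (hH.2.1 ▸ radius_le_eccent)

lemma ecc_ne_of_lt_dist {x y : W} (h : r < H.dist x y) : ecc H x ≠ graphRadius H := by
  have : ((r + 1 : ℕ) : ℕ∞) ≤ H.eccent x := hH.1.le_eccent_of_le_dist h
  rw [hH.2.1]
  intro hx
  rw [show H.eccent x = ecc H x from rfl, hx] at this
  norm_cast at this
  omega

lemma exists_lt_dist : ∃ w w', r < H.dist w w' := by
  obtain ⟨w, hw⟩ := Set.nonempty_of_ncard_ne_zero (s := {u | ecc H u ≠ graphRadius H})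
    (by rw [hH.2.2]; norm_num)
  have hlt : (r : ℕ∞) < H.eccent w :=
    lt_of_le_of_ne (hH.2.1 ▸ radius_le_eccent) (hH.2.1 ▸ Ne.symm hw)
  obtain ⟨w', hw'⟩ := hH.1.exists_le_dist_of_le_eccent (n := r + 1)
    (by exact_mod_cast Order.add_one_le_of_lt hlt)
  exact ⟨w, w', hw'⟩

lemma eq_of_lt_dist_of_lt_dist {z a b : W} (ha : r < H.dist z a) (hb : r < H.dist z b) :
    a = b := by
  obtain ⟨w₁, w₂, -, hset⟩ := Set.ncard_eq_two.mp hH.2.2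
  have mem : ∀ x y, r < H.dist x y → x = w₁ ∨ x = w₂ := fun x y h => by
    have hx : x ∈ {u | ecc H u ≠ graphRadius H} := hH.ecc_ne_of_lt_dist h
    rwa [hset] at hx
  have hza : z ≠ a := by rintro rfl; simp at ha
  have hzb : z ≠ b := by rintro rfl; simp at hb
  have hz := mem z a ha
  have ha' := mem a z (SimpleGraph.dist_comm ▸ ha)
  have hb' := mem b z (SimpleGraph.dist_comm ▸ hb)
  grind

end IsASC

section DiameterTwo

variable {V : Type*} {G : SimpleGraph V}

lemma edist_le_two_of_graphDiam (hdiam : graphDiam G = 2) (x y : V) : G.edist x y ≤ 2 :=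
  edist_le_ediam.trans hdiam.le

lemma exists_ne_not_adj_of_graphDiam (hdiam : graphDiam G = 2) : ∃ u v, u ≠ v ∧ ¬G.Adj u v := by
  have hdiam' : G.ediam = 2 := hdiam
  have : Nontrivial V := nontrivial_of_ediam_ne_zero (hdiam' ▸ two_ne_zero)
  obtain ⟨u, v, huv⟩ := exists_edist_eq_ediam_of_ne_top (G := G) (hdiam' ▸ ENat.natCast_ne_top 2)
  obtain ⟨hne, hnadj, -⟩ := edist_eq_two_iff.mp (huv.trans hdiam')
  exact ⟨u, v, hne, hnadj⟩

variable (hG : ∀ x y, G.edist x y ≤ 2) {x y : V}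
include hG

lemma edist_eq_two_of_ne_of_not_adj (hne : x ≠ y) (hnadj : ¬G.Adj x y) : G.edist x y = 2 := by
  have h1 : 1 < G.edist x y := not_le.mp fun h => by
    rcases edist_le_one_iff_adj_or_eq.mp h with h | h
    exacts [hnadj h, hne h]
  exact le_antisymm (hG x y) (Order.add_one_le_of_lt h1)

lemma ecc_eq_two_of_ne_of_not_adj (hne : x ≠ y) (hnadj : ¬G.Adj x y) : ecc G x = 2 :=
  le_antisymm (eccent_le_iff x 2 |>.mpr (hG x))
    ((edist_eq_two_of_ne_of_not_adj hG hne hnadj).ge.trans edist_le_eccent)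

lemma mem_eccSet_of_ne_of_not_adj (hne : x ≠ y) (hnadj : ¬G.Adj x y) : y ∈ eccSet G x :=
  (edist_eq_two_of_ne_of_not_adj hG hne hnadj).trans (ecc_eq_two_of_ne_of_not_adj hG hne hnadj).symm

lemma not_adj_of_mem_eccSet {q : V} (hne : x ≠ y) (hnadj : ¬G.Adj x y) (hq : q ∈ eccSet G x) :
    ¬G.Adj x q := fun h => by
  have : G.edist x q = 2 := hq.trans (ecc_eq_two_of_ne_of_not_adj hG hne hnadj)
  rw [edist_eq_one_iff_adj.mpr h] at this
  norm_num at this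

lemma exists_adj_adj_of_ne_of_not_adj (hne : x ≠ y) (hnadj : ¬G.Adj x y) :
    ∃ m, G.Adj x m ∧ G.Adj m y := by
  obtain ⟨-, -, m, hm⟩ := edist_eq_two_iff.mp (edist_eq_two_of_ne_of_not_adj hG hne hnadj)
  exact ⟨m, (G.mem_commonNeighbors.mp hm).1, (G.mem_commonNeighbors.mp hm).2.symm⟩

end DiameterTwo

lemma dist_inl_le_two {V α : Type*} {G : SimpleGraph V} {H : SimpleGraph (V ⊕ α)}
    (hG : ∀ x y, G.edist x y ≤ 2) (hind : ∀ x y, G.Adj x y → H.Adj (inl x) (inl y))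
    (hH : H.Connected) (x y : V) : H.dist (inl x) (inl y) ≤ 2 := by
  have := (edist_map_le ⟨inl, hind _ _⟩ x y).trans (hG x y)
  rw [← (hH _ _).coe_dist_eq_edist] at this
  exact_mod_cast this

section Construction

variable {V : Type*} (G : SimpleGraph V) (u : V)

/-- The vertices `inr 0`, `inr 1`, `inr 2`, `inr 3` are `p`, `a`, `b`, `c` of the construction. -/
def fourExtension : SimpleGraph (V ⊕ Fin 4) := SimpleGraph.fromRel fun
  | inl x, inl y => G.Adj x y
  | inl x, inr i => (i = 0 ∨ i = 1) ∧ x = u ∨ i = 3 ∧ x ≠ u ∧ ¬G.Adj u x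
  | inr _, inl _ => False
  | inr i, inr j => i = 1 ∧ j = 2 ∨ i = 2 ∧ j = 3

variable {G u}

@[simp]
lemma fourExtension_adj_inl_inl {x y : V} :
    (fourExtension G u).Adj (inl x) (inl y) ↔ G.Adj x y := by
  simp only [fourExtension, fromRel_adj, ne_eq, inl.injEq]
  exact ⟨fun h => h.2.elim id .symm, fun h => ⟨h.ne, Or.inl h⟩⟩

@[simp]
lemma fourExtension_adj_inl_inr {x : V} {i : Fin 4} :
    (fourExtension G u).Adj (inl x) (inr i) ↔
      (i = 0 ∨ i = 1) ∧ x = u ∨ i = 3 ∧ x ≠ u ∧ ¬G.Adj u x := by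
  simp [fourExtension]

@[simp]
lemma fourExtension_adj_inr_inl {x : V} {i : Fin 4} :
    (fourExtension G u).Adj (inr i) (inl x) ↔
      (i = 0 ∨ i = 1) ∧ x = u ∨ i = 3 ∧ x ≠ u ∧ ¬G.Adj u x := by
  rw [adj_comm, fourExtension_adj_inl_inr]

@[simp]
lemma fourExtension_adj_inr_inr {i j : Fin 4} :
    (fourExtension G u).Adj (inr i) (inr j) ↔
      i = 1 ∧ j = 2 ∨ i = 2 ∧ j = 1 ∨ i = 2 ∧ j = 3 ∨ i = 3 ∧ j = 2 := by
  fin_cases i <;> fin_cases j <;> simp [fourExtension]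

variable {v : V} (hG : ∀ x y, G.edist x y ≤ 2)
include hG

lemma fourExtension_connected : (fourExtension G u).Connected := by
  have hu : ∀ w, (fourExtension G u).Reachable (inl u) w := by
    have h1 : (fourExtension G u).Reachable (inl u) (inr 1) := Adj.reachable (by simp)
    have h2 : (fourExtension G u).Reachable (inl u) (inr 2) := h1.trans (Adj.reachable (by simp))
    rintro (x | i)
    · exact (reachable_of_edist_ne_top (ne_top_of_le_ne_top (by decide) (hG u x))).map
        ⟨inl, fourExtension_adj_inl_inl.mpr⟩
    · fin_cases i
      · exact Adj.reachable (by simp)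
      · exact h1
      · exact h2
      · exact h2.trans (Adj.reachable (by simp))
  exact (connected_iff _).mpr ⟨fun w w' => (hu w).symm.trans (hu w'), ⟨inl u⟩⟩

lemma fourExtension_dist_inl_le_two (x y : V) : (fourExtension G u).dist (inl x) (inl y) ≤ 2 :=
  dist_inl_le_two hG (fun _ _ => fourExtension_adj_inl_inl.mpr) (fourExtension_connected hG) x y

lemma fourExtension_three_le_dist_inl_inr_three :
    3 ≤ (fourExtension G u).dist (inl u) (inr 3) := by
  have hc := fourExtension_connected (u := u) hG
  refine hc.le_dist_of_forall_adj (by simp) ?_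
  rintro (y | j) h
  · simp_all [hc.two_le_dist_iff]
  · fin_cases j <;> simp_all [hc.two_le_dist_iff]

lemma fourExtension_four_le_dist_inr_zero_inr_three :
    4 ≤ (fourExtension G u).dist (inr 0) (inr 3) := by
  have hc := fourExtension_connected (u := u) hG
  refine hc.le_dist_of_forall_adj (by simp) ?_
  rintro (y | j) h
  · obtain rfl : y = u := by simpa using h
    exact fourExtension_three_le_dist_inl_inr_three hG
  · fin_cases j <;> simp_all

lemma fourExtension_three_le_dist_inr_two_inl {x : V} (hx : G.Adj u x) :
    3 ≤ (fourExtension G u).dist (inr 2) (inl x) := by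
  have hc := fourExtension_connected (u := u) hG
  refine hc.le_dist_of_forall_adj (by simp) ?_
  rintro (y | j) h
  · simp_all
  · fin_cases j <;> simp_all [hc.two_le_dist_iff, hx.ne']

lemma fourExtension_three_le_dist_inr_inl {x : V} (hx : x ≠ u) (hnx : ¬G.Adj u x) {i : Fin 4}
    (hi : i = 0 ∨ i = 1) : 3 ≤ (fourExtension G u).dist (inr i) (inl x) := by
  have hc := fourExtension_connected (u := u) hG
  refine hc.le_dist_of_forall_adj (by simp) ?_
  rintro (y | j) h
  · obtain rfl : y = u := by rcases hi with rfl | rfl <;> simpa using h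
    simp [hc.two_le_dist_iff, Ne.symm hx, hnx]
  · fin_cases j <;> simp_all [hc.two_le_dist_iff]

lemma fourExtension_three_le_dist_inr_two_inr_zero :
    3 ≤ (fourExtension G u).dist (inr 2) (inr 0) := by
  have hc := fourExtension_connected (u := u) hG
  refine hc.le_dist_of_forall_adj (by simp) ?_
  rintro (y | j) h
  · simp_all
  · fin_cases j <;> simp_all [hc.two_le_dist_iff]

lemma fourExtension_dist_inr_inr_le_three {i : Fin 4} (hi : i = 1 ∨ i = 2) (j : Fin 4) :
    (fourExtension G u).dist (inr i) (inr j) ≤ 3 := by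
  have hc := fourExtension_connected (u := u) hG
  have h10 := hc.dist_le_dist_add_one_of_adj
    (show (fourExtension G u).Adj (inr 1) (inl u) by simp) (inr 0)
  have h20 := hc.dist_le_dist_add_one_of_adj
    (show (fourExtension G u).Adj (inr 2) (inr 1) by simp) (inr 0)
  have h13 := hc.dist_le_dist_add_one_of_adj
    (show (fourExtension G u).Adj (inr 1) (inr 2) by simp) (inr 3)
  have hu0 := (show (fourExtension G u).Adj (inl u) (inr 0) by simp).dist_eq_one
  have h12 := (show (fourExtension G u).Adj (inr 1) (inr 2) by simp).dist_eq_one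
  have h21 := (show (fourExtension G u).Adj (inr 2) (inr 1) by simp).dist_eq_one
  have h23 := (show (fourExtension G u).Adj (inr 2) (inr 3) by simp).dist_eq_one
  rcases hi with rfl | rfl <;> fin_cases j <;>
    simp only [Fin.reduceFinMk, Fin.isValue, SimpleGraph.dist_self] <;> omega

variable (huv : u ≠ v) (hnadj : ¬G.Adj u v)
include huv hnadj

lemma fourExtension_dist_inr_inl_le_three (i : Fin 4) (x : V) :
    (fourExtension G u).dist (inr i) (inl x) ≤ 3 := by
  have hc := fourExtension_connected (u := u) hG
  have hux := fourExtension_dist_inl_le_two (u := u) hG u x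
  have ha := hc.dist_le_dist_add_one_of_adj (show (fourExtension G u).Adj (inr 1) (inl u) by simp)
  fin_cases i <;> simp only [Fin.reduceFinMk, Fin.isValue]
  · have := hc.dist_le_dist_add_one_of_adj
      (show (fourExtension G u).Adj (inr 0) (inl u) by simp) (inl x)
    omega
  · have := ha (inl x)
    omega
  · by_cases hx : x = u ∨ G.Adj u x
    · have := ha (inl x)
      have := hc.dist_le_dist_add_one_of_adj
        (show (fourExtension G u).Adj (inr 2) (inr 1) by simp) (inl x)
      have : (fourExtension G u).dist (inl u) (inl x) ≤ 1 := by
        rcases hx with rfl | h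
        · simp
        · exact (fourExtension_adj_inl_inl.mpr h).dist_eq_one.le
      omega
    · refine (hc.dist_le_two_of_adj_of_adj (show (fourExtension G u).Adj (inr 2) (inr 3) by simp)
        ?_).trans (by norm_num)
      simp only [fourExtension_adj_inr_inl]
      tauto
  · have := hc.dist_le_dist_add_one_of_adj
      (show (fourExtension G u).Adj (inr 3) (inl v) by simp [huv.symm, hnadj]) (inl x)
    have := fourExtension_dist_inl_le_two (u := u) hG v x
    omega

lemma fourExtension_ecc_inl (x : V) : ecc (fourExtension G u) (inl x) = 3 := by
  have hc := fourExtension_connected (u := u) hG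
  have hle : ∀ w, (fourExtension G u).dist (inl x) w ≤ 3 := by
    rintro (y | i)
    · exact (fourExtension_dist_inl_le_two hG x y).trans (by norm_num)
    · rw [SimpleGraph.dist_comm]
      exact fourExtension_dist_inr_inl_le_three hG huv hnadj i x
  by_cases hxu : x = u
  · subst hxu
    exact hc.eccent_eq_of_forall_dist_le hle (fourExtension_three_le_dist_inl_inr_three hG)
  by_cases hx : G.Adj u x
  · refine hc.eccent_eq_of_forall_dist_le hle (v := inr 2) ?_
    rw [SimpleGraph.dist_comm]
    exact fourExtension_three_le_dist_inr_two_inl hG hx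
  · refine hc.eccent_eq_of_forall_dist_le hle (v := inr 0) ?_
    rw [SimpleGraph.dist_comm]
    exact fourExtension_three_le_dist_inr_inl hG hxu hx (Or.inl rfl)

lemma fourExtension_ecc_inr {i : Fin 4} (hi : i = 1 ∨ i = 2) :
    ecc (fourExtension G u) (inr i) = 3 := by
  have hc := fourExtension_connected (u := u) hG
  have hle : ∀ w, (fourExtension G u).dist (inr i) w ≤ 3 := by
    rintro (x | j)
    · exact fourExtension_dist_inr_inl_le_three hG huv hnadj i x
    · exact fourExtension_dist_inr_inr_le_three hG hi j
  rcases hi with rfl | rfl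
  · exact hc.eccent_eq_of_forall_dist_le hle
      (fourExtension_three_le_dist_inr_inl hG (Ne.symm huv) hnadj (Or.inr rfl))
  · exact hc.eccent_eq_of_forall_dist_le hle (fourExtension_three_le_dist_inr_two_inr_zero hG)

omit huv hnadj in
lemma fourExtension_four_le_ecc {i : Fin 4} (hi : i = 0 ∨ i = 3) :
    4 ≤ ecc (fourExtension G u) (inr i) := by
  have hc := fourExtension_connected (u := u) hG
  have h := fourExtension_four_le_dist_inr_zero_inr_three (u := u) hG
  rcases hi with rfl | rfl
  · exact_mod_cast hc.le_eccent_of_le_dist h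
  · rw [SimpleGraph.dist_comm] at h
    exact_mod_cast hc.le_eccent_of_le_dist h

lemma isASC_fourExtension : IsASC 3 (fourExtension G u) := by
  have hrad : graphRadius (fourExtension G u) = 3 := by
    refine le_antisymm ((iInf_le _ (inr 1)).trans (fourExtension_ecc_inr hG huv hnadj
      (Or.inl rfl)).le) (le_iInf ?_)
    rintro (x | i)
    · exact (fourExtension_ecc_inl hG huv hnadj x).ge
    · fin_cases i
      · exact le_trans (by norm_num) (fourExtension_four_le_ecc hG (Or.inl rfl))
      · exact (fourExtension_ecc_inr hG huv hnadj (Or.inl rfl)).ge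
      · exact (fourExtension_ecc_inr hG huv hnadj (Or.inr rfl)).ge
      · exact le_trans (by norm_num) (fourExtension_four_le_ecc hG (Or.inr rfl))
  refine ⟨fourExtension_connected hG, hrad, ?_⟩
  have hset : {w | ecc (fourExtension G u) w ≠ graphRadius (fourExtension G u)} =
      {inr 0, inr 3} := by
    ext (x | i)
    · simp [hrad, fourExtension_ecc_inl hG huv hnadj x]
    · fin_cases i
      · simpa [hrad] using ((fourExtension_four_le_ecc hG (Or.inl rfl)).trans_lt' (by norm_num)).ne'
      · simp [hrad, fourExtension_ecc_inr hG huv hnadj (Or.inl rfl)]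
      · simp [hrad, fourExtension_ecc_inr hG huv hnadj (Or.inr rfl)]
      · simpa [hrad] using ((fourExtension_four_le_ecc hG (Or.inr rfl)).trans_lt' (by norm_num)).ne'
  rw [hset, Set.ncard_pair (by simp)]

end Construction
def Attached {V : Type*} {k : ℕ} (H : SimpleGraph (V ⊕ Fin k)) (t : Fin k) : Prop :=
  ∃ x, H.Adj (inr t) (inl x)

section LowerBound

variable {V : Type*} {G : SimpleGraph V} {k : ℕ} {H : SimpleGraph (V ⊕ Fin k)}
  (hG : ∀ x y, G.edist x y ≤ 2) (hasc : IsASC 3 H)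
  (hind : ∀ x y, H.Adj (inl x) (inl y) ↔ G.Adj x y)

include hasc in
lemma exists_attached (x : V) (t : Fin k) : ∃ s, Attached H s := by
  obtain ⟨_, ⟨s, rfl⟩, y | s', hb, h⟩ := hasc.1.exists_adj_mem_notMem (Set.range inr) ⟨t, rfl⟩
    (show inl x ∉ Set.range inr by simp)
  · exact ⟨s, y, h⟩
  · exact absurd ⟨s', rfl⟩ hb

include hasc in
lemma exists_adj_inr_of_not_attached {t : Fin k} (x : V) (ht : ¬Attached H t) :
    ∃ s, H.Adj (inr t) (inr s) := by
  obtain ⟨y | s, h, -⟩ := hasc.1.exists_adj_dist_add_one_le (show inr t ≠ inl x by simp)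
  exacts [absurd ⟨y, h⟩ ht, ⟨s, h⟩]

include hasc hind in
lemma ne_and_not_adj_of_two_le_dist {x y : V} (h : 2 ≤ H.dist (inl x) (inl y)) :
    x ≠ y ∧ ¬G.Adj x y := by
  rw [hasc.1.two_le_dist_iff, ne_eq, inl.injEq, hind] at h
  exact h

include hasc hind in
lemma ne_and_not_adj_of_adj_of_three_le_dist {t : Fin k} {x y : V} (hx : H.Adj (inr t) (inl x))
    (hy : 3 ≤ H.dist (inr t) (inl y)) : x ≠ y ∧ ¬G.Adj x y := by
  have := hasc.1.dist_le_dist_add_one_of_adj hx (inl y)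
  exact ne_and_not_adj_of_two_le_dist hasc hind (by omega)

include hG hasc hind

lemma mem_eccSet_of_adj_of_three_le_dist {t : Fin k} {x y : V} (hx : H.Adj (inr t) (inl x))
    (hy : 3 ≤ H.dist (inr t) (inl y)) : y ∈ eccSet G x :=
  mem_eccSet_of_ne_of_not_adj hG (ne_and_not_adj_of_adj_of_three_le_dist hasc hind hx hy).1
    (ne_and_not_adj_of_adj_of_three_le_dist hasc hind hx hy).2

lemma dist_inl_inl_le_two (x y : V) : H.dist (inl x) (inl y) ≤ 2 :=
  dist_inl_le_two hG (fun x y => (hind x y).mpr) hasc.1 x y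

lemma exists_three_le_dist_inr_inl (x : V) : ∃ t, 3 ≤ H.dist (inr t) (inl x) := by
  obtain ⟨w | t, hw⟩ := hasc.exists_le_dist (inl x)
  · have := dist_inl_inl_le_two hG hasc hind x w
    omega
  · exact ⟨t, SimpleGraph.dist_comm ▸ hw⟩

lemma false_of_forall_adj_or_adj (x y : V)
    (h : ∀ t, H.Adj (inr t) (inl x) ∨ H.Adj (inr t) (inl y)) : False := by
  have hc := hasc.1
  have near : ∀ z : V, (∀ t, H.dist (inr t) (inl z) ≤ 2) → False := fun z hz => by
    obtain ⟨t, ht⟩ := exists_three_le_dist_inr_inl hG hasc hind z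
    have := hz t
    omega
  by_cases hxy : x = y ∨ G.Adj x y
  · refine near x fun t => ?_
    have hyx : H.dist (inl y) (inl x) ≤ 1 := by
      rcases hxy with rfl | hxy
      · simp
      · exact ((hind y x).mpr hxy.symm).dist_eq_one.le
    rcases h t with ht | ht
    · exact ht.dist_eq_one.le.trans (by norm_num)
    · have := hc.dist_le_dist_add_one_of_adj ht (inl x)
      omega
  · push Not at hxy
    obtain ⟨m, hxm, hmy⟩ := exists_adj_adj_of_ne_of_not_adj hG hxy.1 hxy.2
    refine near m fun t => ?_
    rcases h t with ht | ht
    · exact hc.dist_le_two_of_adj_of_adj ht ((hind x m).mpr hxm)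
    · exact hc.dist_le_two_of_adj_of_adj ht ((hind y m).mpr hmy.symm)

lemma false_of_adj_of_forall_adj {t : Fin k} {x : V} (hx : H.Adj (inr t) (inl x))
    (ht : ∀ s, s ≠ t → H.Adj (inr t) (inr s)) : False := by
  obtain ⟨s, hs⟩ := exists_three_le_dist_inr_inl hG hasc hind x
  by_cases hst : s = t
  · subst hst
    rw [hx.dist_eq_one] at hs
    omega
  · have := hasc.1.dist_le_two_of_adj_of_adj (ht s hst).symm hx
    omega

end LowerBound

section SmallExtensions

variable {V : Type*} {G : SimpleGraph V} (hG : ∀ x y, G.edist x y ≤ 2)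
include hG

lemma false_of_isASC_fin_zero {H : SimpleGraph (V ⊕ Fin 0)} (hasc : IsASC 3 H)
    (hind : ∀ x y, H.Adj (inl x) (inl y) ↔ G.Adj x y) (x : V) : False := by
  obtain ⟨t, -⟩ := exists_three_le_dist_inr_inl hG hasc hind x
  exact t.elim0

lemma false_of_isASC_fin_one {H : SimpleGraph (V ⊕ Fin 1)} (hasc : IsASC 3 H)
    (hind : ∀ x y, H.Adj (inl x) (inl y) ↔ G.Adj x y) (x : V) : False := by
  obtain ⟨t, y, hy⟩ := exists_attached hasc x 0
  exact false_of_forall_adj_or_adj hG hasc hind y y fun s => Or.inl (Subsingleton.elim t s ▸ hy)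

lemma false_of_isASC_fin_two {H : SimpleGraph (V ⊕ Fin 2)} (hasc : IsASC 3 H)
    (hind : ∀ x y, H.Adj (inl x) (inl y) ↔ G.Adj x y) (x : V) : False := by
  obtain ⟨t, y, hy⟩ := exists_attached hasc x 0
  obtain ⟨s, hst, hcover⟩ : ∃ s, s ≠ t ∧ ∀ r, r = t ∨ r = s := ⟨1 - t, by omega, by omega⟩
  by_cases hs : Attached H s
  · obtain ⟨z, hz⟩ := hs
    refine false_of_forall_adj_or_adj hG hasc hind y z fun r => ?_
    rcases hcover r with rfl | rfl
    exacts [Or.inl hy, Or.inr hz]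
  · obtain ⟨r, hr⟩ := exists_adj_inr_of_not_attached hasc x hs
    obtain rfl : r = t := (hcover r).resolve_right (by rintro rfl; exact H.irrefl hr)
    refine false_of_adj_of_forall_adj hG hasc hind hy fun r hr' => ?_
    obtain rfl := (hcover r).resolve_left hr'
    exact hr.symm

end SmallExtensions

def EccMeetHasNoIsolated {V : Type*} (G : SimpleGraph V) : Prop :=
  ∀ u v : V, u ≠ v → ¬G.Adj u v → ∀ x ∈ eccSet G u ∩ eccSet G v,
    ∃ y ∈ eccSet G u ∩ eccSet G v, x ≠ y ∧ G.Adj x y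

def EccMeetNeighborsCommon {V : Type*} (G : SimpleGraph V) : Prop :=
  ∀ u v : V, u ≠ v → ¬G.Adj u v → ∀ x ∈ eccSet G u ∩ eccSet G v, ∀ w' : V,
    G.Adj x w' → w' ∉ eccSet G u ∩ eccSet G v → w' ∈ G.neighborSet u ∩ G.neighborSet v

section ThreeAdded

variable {V : Type*} {G : SimpleGraph V} {H : SimpleGraph (V ⊕ Fin 3)}
  (hG : ∀ x y, G.edist x y ≤ 2) (hasc : IsASC 3 H)
  (hind : ∀ x y, H.Adj (inl x) (inl y) ↔ G.Adj x y)
  {t₁ t₂ t₃ : Fin 3} (h12 : t₁ ≠ t₂) (h13 : t₁ ≠ t₃) (h23 : t₂ ≠ t₃)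

include h12 h13 h23 in
lemma eq_or_eq_of_adj_of_not_attached (h3 : ¬Attached H t₃) {w : V ⊕ Fin 3}
    (h : H.Adj (inr t₃) w) : w = inr t₁ ∨ w = inr t₂ := by
  rcases w with y | s
  · exact absurd ⟨y, h⟩ h3
  · rcases Fin.eq_or_eq_or_eq_of_ne h12 h13 h23 s with rfl | rfl | rfl
    exacts [Or.inl rfl, Or.inr rfl, absurd h H.irrefl]

include hG hasc hind h12 h13 h23

lemma three_le_dist_of_le_two {x : V} (h₁ : H.dist (inr t₁) (inl x) ≤ 2)
    (h₂ : H.dist (inr t₂) (inl x) ≤ 2) : 3 ≤ H.dist (inr t₃) (inl x) := by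
  obtain ⟨t, ht⟩ := exists_three_le_dist_inr_inl hG hasc hind x
  rcases Fin.eq_or_eq_or_eq_of_ne h12 h13 h23 t with rfl | rfl | rfl <;> omega

lemma four_le_dist_of_adj (a₁ : Attached H t₁) (a₂ : Attached H t₂)
    (h : H.Adj (inr t₁) (inr t₂)) : 4 ≤ H.dist (inr t₃) (inr t₁) := by
  have hc := hasc.1
  have near : ∀ x, H.Adj (inr t₁) (inl x) ∨ H.Adj (inr t₂) (inl x) →
      3 ≤ H.dist (inr t₃) (inl x) := by
    rintro x (hx | hx)
    · exact three_le_dist_of_le_two hG hasc hind h12 h13 h23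
        (hx.dist_eq_one.trans_le one_le_two) (hc.dist_le_two_of_adj_of_adj h.symm hx)
    · exact three_le_dist_of_le_two hG hasc hind h12 h13 h23
        (hc.dist_le_two_of_adj_of_adj h hx) (hx.dist_eq_one.trans_le one_le_two)
  have not_near : ∀ x, H.Adj (inr t₃) (inl x) →
      ¬(H.Adj (inr t₁) (inl x) ∨ H.Adj (inr t₂) (inl x)) := fun x h₃ hx => by
    have := near x hx
    rw [h₃.dist_eq_one] at this
    omega
  have not_adj : ∀ s, s ≠ t₃ → ¬H.Adj (inr t₃) (inr s) := fun s hs h₃ => by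
    obtain ⟨x, hx, hnear⟩ : ∃ x, H.Adj (inr s) (inl x) ∧
        (H.Adj (inr t₁) (inl x) ∨ H.Adj (inr t₂) (inl x)) := by
      rcases Fin.eq_or_eq_or_eq_of_ne h12 h13 h23 s with rfl | rfl | rfl
      · obtain ⟨x, hx⟩ := a₁
        exact ⟨x, hx, Or.inl hx⟩
      · obtain ⟨x, hx⟩ := a₂
        exact ⟨x, hx, Or.inr hx⟩
      · exact absurd rfl hs
    have := near x hnear
    have := hc.dist_le_two_of_adj_of_adj h₃ hx
    omega
  have far : ∀ w, H.Adj (inr t₃) (inl w) → 3 ≤ H.dist (inr t₁) (inl w) := fun w hw => by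
    refine hc.le_dist_of_forall_adj (by simp) fun m hm => ?_
    rcases m with x | s
    · have := near x (Or.inl hm)
      have := hc.dist_le_dist_add_one_of_adj hw (inl x)
      rw [SimpleGraph.dist_comm]
      omega
    · refine hc.two_le_dist_iff.mpr ⟨by simp, fun hs => ?_⟩
      rcases Fin.eq_or_eq_or_eq_of_ne h12 h13 h23 s with rfl | rfl | rfl
      · exact H.irrefl hm
      · exact not_near w hw (Or.inr hs)
      · exact not_adj t₁ h13 hm.symm
  refine hc.le_dist_of_forall_adj (by simpa using h13.symm) fun m hm => ?_
  rcases m with w | s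
  · rw [SimpleGraph.dist_comm]
    exact far w hm
  · by_cases hs : s = t₃
    · exact absurd (hs ▸ hm) H.irrefl
    · exact absurd hm (not_adj s hs)

lemma false_of_adj_of_attached (a₁ : Attached H t₁) (a₂ : Attached H t₂)
    (h : H.Adj (inr t₁) (inr t₂)) : False :=
  h12 (inr_injective (hasc.eq_of_lt_dist_of_lt_dist
    (four_le_dist_of_adj hG hasc hind h12 h13 h23 a₁ a₂ h)
    (four_le_dist_of_adj hG hasc hind h12.symm h23 h13 a₂ a₁ h.symm)))

lemma false_of_not_attached_of_adj_of_not_adj (a₁ : Attached H t₁) (h₃ : ¬Attached H t₃)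
    (h31 : H.Adj (inr t₃) (inr t₁)) (h32 : ¬H.Adj (inr t₃) (inr t₂)) : False := by
  have hc := hasc.1
  obtain ⟨x₀, hx₀⟩ := a₁
  have n12 : ¬H.Adj (inr t₁) (inr t₂) := fun h => by
    refine false_of_adj_of_forall_adj hG hasc hind hx₀ fun s hs => ?_
    rcases Fin.eq_or_eq_or_eq_of_ne h12 h13 h23 s with rfl | rfl | rfl
    exacts [absurd rfl hs, h, h31.symm]
  have d12 : 2 ≤ H.dist (inr t₁) (inr t₂) := hc.two_le_dist_iff.mpr ⟨by simpa using h12, n12⟩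
  have d32 : 3 ≤ H.dist (inr t₃) (inr t₂) := by
    refine hc.le_dist_of_forall_adj (by simpa using h23.symm) fun m hm => ?_
    rcases eq_or_eq_of_adj_of_not_attached h12 h13 h23 h₃ hm with rfl | rfl
    exacts [d12, absurd hm h32]
  have d12' : 4 ≤ H.dist (inr t₁) (inr t₂) := by
    refine hc.le_dist_of_forall_adj (by simpa using h12) fun m hm => ?_
    rcases m with x | s
    · refine three_le_dist_of_le_two hG hasc hind h13 h12 h23.symm ?_ ?_ |>.trans_eq
        SimpleGraph.dist_comm
      · exact hm.dist_eq_one.trans_le one_le_two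
      · exact hc.dist_le_two_of_adj_of_adj h31 hm
    · rcases Fin.eq_or_eq_or_eq_of_ne h12 h13 h23 s with rfl | rfl | rfl
      exacts [absurd hm H.irrefl, absurd hm n12, d32]
  have d32' : 4 ≤ H.dist (inr t₃) (inr t₂) := by
    refine hc.le_dist_of_forall_adj (by simpa using h23.symm) fun m hm => ?_
    rcases eq_or_eq_of_adj_of_not_attached h12 h13 h23 h₃ hm with rfl | rfl
    exacts [by omega, absurd hm h32]
  exact h13 (inr_injective (hasc.eq_of_lt_dist_of_lt_dist
    (SimpleGraph.dist_comm.trans_ge d12') (SimpleGraph.dist_comm.trans_ge d32')))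

lemma false_of_attached_of_not_attached_of_path (a₁ : Attached H t₁) (h₂ : ¬Attached H t₂)
    (h₃ : ¬Attached H t₃) (h12a : H.Adj (inr t₁) (inr t₂)) (h23a : H.Adj (inr t₂) (inr t₃))
    (n13 : ¬H.Adj (inr t₁) (inr t₃)) : False := by
  have hc := hasc.1
  have far₂ : ∀ x, ¬H.Adj (inr t₁) (inl x) → 3 ≤ H.dist (inr t₂) (inl x) := fun x hx => by
    refine hc.le_dist_of_forall_adj (by simp) fun m hm => ?_
    rcases eq_or_eq_of_adj_of_not_attached h13 h12 h23.symm h₂ hm with rfl | rfl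
    · exact hc.two_le_dist_iff.mpr ⟨by simp, hx⟩
    · exact hc.two_le_dist_iff.mpr ⟨by simp, fun h => h₃ ⟨x, h⟩⟩
  have far₃ : ∀ x, ¬H.Adj (inr t₁) (inl x) → 4 ≤ H.dist (inr t₃) (inl x) := fun x hx => by
    refine hc.le_dist_of_forall_adj (by simp) fun m hm => ?_
    rcases eq_or_eq_of_adj_of_not_attached h12 h13 h23 h₃ hm with rfl | rfl
    exacts [absurd hm.symm n13, far₂ x hx]
  obtain ⟨x₀ | s, hx₀⟩ := hasc.exists_le_dist (inr t₁)
  swap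
  · have := hc.dist_le_two_of_adj_of_adj h12a h23a
    rcases Fin.eq_or_eq_or_eq_of_ne h12 h13 h23 s with rfl | rfl | rfl
    · simp at hx₀
    · rw [h12a.dist_eq_one] at hx₀
      omega
    · omega
  obtain ⟨x, hx⟩ := a₁
  obtain ⟨hne, hnadj⟩ := ne_and_not_adj_of_adj_of_three_le_dist hasc hind hx hx₀
  obtain ⟨m, -, hm⟩ := exists_adj_adj_of_ne_of_not_adj hG hne hnadj
  have n₀ : ¬H.Adj (inr t₁) (inl x₀) := fun h => by
    rw [h.dist_eq_one] at hx₀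
    omega
  have nm : ¬H.Adj (inr t₁) (inl m) := fun h => by
    have := hc.dist_le_two_of_adj_of_adj h ((hind m x₀).mpr hm)
    omega
  exact hm.ne (inl_injective (hasc.eq_of_lt_dist_of_lt_dist (far₃ m nm) (far₃ x₀ n₀)))

lemma false_of_attached_of_not_attached_of_adj_of_adj (a₁ : Attached H t₁) (h₂ : ¬Attached H t₂)
    (h₃ : ¬Attached H t₃) (h31 : H.Adj (inr t₃) (inr t₁)) (h32 : H.Adj (inr t₃) (inr t₂)) :
    False := by
  by_cases h12a : H.Adj (inr t₁) (inr t₂)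
  · obtain ⟨x, hx⟩ := a₁
    refine false_of_adj_of_forall_adj hG hasc hind hx fun s hs => ?_
    rcases Fin.eq_or_eq_or_eq_of_ne h12 h13 h23 s with rfl | rfl | rfl
    exacts [absurd rfl hs, h12a, h31.symm]
  · exact false_of_attached_of_not_attached_of_path hG hasc hind h13 h12 h23.symm a₁ h₃ h₂
      h31.symm h32 h12a

lemma dist_inr_le_three_of_adj {x : V} (hx : H.Adj (inr t₁) (inl x))
    (h31 : H.Adj (inr t₃) (inr t₁)) (h32 : H.Adj (inr t₃) (inr t₂)) (w : V ⊕ Fin 3) :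
    H.dist (inr t₁) w ≤ 3 := by
  have hc := hasc.1
  rcases w with y | s
  · have := hc.dist_le_dist_add_one_of_adj hx (inl y)
    have := dist_inl_inl_le_two hG hasc hind x y
    omega
  · rcases Fin.eq_or_eq_or_eq_of_ne h12 h13 h23 s with rfl | rfl | rfl
    · simp
    · exact (hc.dist_le_two_of_adj_of_adj h31.symm h32).trans (by norm_num)
    · exact h31.symm.dist_eq_one.trans_le (by norm_num)

lemma false_of_adj_of_dist_le_two (hN : EccMeetNeighborsCommon G) {z q q' : V}
    (hz : H.Adj (inr t₂) (inl z)) (h₃ : ¬Attached H t₃)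
    (h31 : H.Adj (inr t₃) (inr t₁)) (n12 : ¬H.Adj (inr t₁) (inr t₂))
    (hq : 3 ≤ H.dist (inr t₁) (inl q)) (hqz : q ∈ eccSet G z) (hqq' : G.Adj q q')
    (hq'z : q' ∈ eccSet G z) (hq' : H.dist (inr t₁) (inl q') ≤ 2) : False := by
  have hc := hasc.1
  have n1q' : ¬H.Adj (inr t₁) (inl q') := fun h => by
    have := hc.dist_le_two_of_adj_of_adj h ((hind q' q).mpr hqq'.symm)
    omega
  obtain ⟨x | s, hm, hmd⟩ := hc.exists_adj_dist_add_one_le (show inr t₁ ≠ inl q' by simp)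
  swap
  · rcases Fin.eq_or_eq_or_eq_of_ne h12 h13 h23 s with rfl | rfl | rfl
    · exact H.irrefl hm
    · exact n12 hm
    · exact h₃ ⟨q', hc.adj_of_dist_le_one (by simp) (by omega)⟩
  have hxq' : G.Adj x q' := (hind x q').mp (hc.adj_of_dist_le_one
    (by rintro ⟨⟩; exact n1q' hm) (by omega))
  have hx₂ : 3 ≤ H.dist (inr t₂) (inl x) := three_le_dist_of_le_two hG hasc hind h13 h12 h23.symm
    (hm.dist_eq_one.trans_le one_le_two) (hc.dist_le_two_of_adj_of_adj h31 hm)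
  obtain ⟨hne, hnadj⟩ := ne_and_not_adj_of_adj_of_three_le_dist hasc hind hz hx₂
  have hq'x : q' ∉ eccSet G x ∩ eccSet G z := fun h =>
    not_adj_of_mem_eccSet hG hne.symm (fun h' => hnadj h'.symm) h.1 hxq'
  have hzq' := (hN x z hne.symm (fun h => hnadj h.symm) q
    ⟨mem_eccSet_of_adj_of_three_le_dist hG hasc hind hm hq, hqz⟩ q' hqq' hq'x).2
  exact not_adj_of_mem_eccSet hG hne hnadj hq'z hzq'

lemma false_of_attached_of_attached_of_not_attached (hS : EccMeetHasNoIsolated G)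
    (hN : EccMeetNeighborsCommon G) (a₁ : Attached H t₁) (a₂ : Attached H t₂) (h₃ : ¬Attached H t₃)
    (h31 : H.Adj (inr t₃) (inr t₁)) (h32 : H.Adj (inr t₃) (inr t₂)) : False := by
  have hc := hasc.1
  have n12 : ¬H.Adj (inr t₁) (inr t₂) := false_of_adj_of_attached hG hasc hind h12 h13 h23 a₁ a₂
  obtain ⟨x₀, hx₀⟩ := a₁
  obtain ⟨y₀, hy₀⟩ := a₂
  obtain ⟨hne, hnadj⟩ := ne_and_not_adj_of_adj_of_three_le_dist hasc hind hy₀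
    (three_le_dist_of_le_two hG hasc hind h13 h12 h23.symm
      (hx₀.dist_eq_one.trans_le one_le_two) (hc.dist_le_two_of_adj_of_adj h31 hx₀))
  have bound : ∀ s, s ≠ t₃ → ∀ w, H.dist (inr s) w ≤ 3 := fun s hs => by
    rcases Fin.eq_or_eq_or_eq_of_ne h12 h13 h23 s with rfl | rfl | rfl
    · exact dist_inr_le_three_of_adj hG hasc hind h12 h13 h23 hx₀ h31 h32
    · exact dist_inr_le_three_of_adj hG hasc hind h12.symm h23 h13 hy₀ h32 h31
    · exact absurd rfl hs
  -- `t₁` and `t₂` have eccentricity at most 3, so the far pair of `H` is `t₃` and a vertex of `G`.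
  obtain ⟨q, hq⟩ : ∃ q, 3 < H.dist (inr t₃) (inl q) := by
    obtain ⟨x | s, y | s', h⟩ := hasc.exists_lt_dist
    · exact absurd (dist_inl_inl_le_two hG hasc hind x y) (by omega)
    · by_cases hs' : s' = t₃
      · exact ⟨x, hs' ▸ SimpleGraph.dist_comm ▸ h⟩
      · exact absurd (SimpleGraph.dist_comm ▸ bound s' hs' (inl x)) (by omega)
    · by_cases hs : s = t₃
      · exact ⟨y, hs ▸ h⟩
      · exact absurd (bound s hs (inl y)) (by omega)
    · by_cases hs : s = t₃
      · by_cases hs' : s' = t₃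
        · simp [hs, hs'] at h
        · exact absurd (SimpleGraph.dist_comm ▸ bound s' hs' (inr s)) (by omega)
      · exact absurd (bound s hs (inr s')) (by omega)
  have hq₁ : 3 ≤ H.dist (inr t₁) (inl q) := by
    have := hc.dist_le_dist_add_one_of_adj h31 (inl q)
    omega
  have hq₂ : 3 ≤ H.dist (inr t₂) (inl q) := by
    have := hc.dist_le_dist_add_one_of_adj h32 (inl q)
    omega
  have hqS : q ∈ eccSet G x₀ ∩ eccSet G y₀ :=
    ⟨mem_eccSet_of_adj_of_three_le_dist hG hasc hind hx₀ hq₁,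
      mem_eccSet_of_adj_of_three_le_dist hG hasc hind hy₀ hq₂⟩
  obtain ⟨q', hq'S, hqq', hadj⟩ := hS x₀ y₀ hne.symm (fun h => hnadj h.symm) q hqS
  have hq' : H.dist (inr t₃) (inl q') ≤ 3 := by
    by_contra! h
    exact hqq' (inl_injective (hasc.eq_of_lt_dist_of_lt_dist hq h))
  obtain ⟨m, hm, hmd⟩ := hc.exists_adj_dist_add_one_le (show inr t₃ ≠ inl q' by simp)
  rcases eq_or_eq_of_adj_of_not_attached h12 h13 h23 h₃ hm with rfl | rfl
  · exact false_of_adj_of_dist_le_two hG hasc hind h12 h13 h23 hN hy₀ h₃ h31 n12 hq₁ hqS.2 hadj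
      hq'S.2 (by omega)
  · exact false_of_adj_of_dist_le_two hG hasc hind h12.symm h23 h13 hN hx₀ h₃ h32
      (fun h => n12 h.symm) hq₂ hqS.1 hadj hq'S.1 (by omega)

lemma false_of_not_attached_of_adj (hS : EccMeetHasNoIsolated G) (hN : EccMeetNeighborsCommon G)
    (x : V) (h₃ : ¬Attached H t₃) (h31 : H.Adj (inr t₃) (inr t₁)) : False := by
  have some_attached : Attached H t₁ ∨ Attached H t₂ := by
    obtain ⟨s, hs⟩ := exists_attached hasc x t₁
    rcases Fin.eq_or_eq_or_eq_of_ne h12 h13 h23 s with rfl | rfl | rfl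
    exacts [Or.inl hs, Or.inr hs, absurd hs h₃]
  by_cases h32 : H.Adj (inr t₃) (inr t₂)
  · by_cases a₁ : Attached H t₁ <;> by_cases a₂ : Attached H t₂
    · exact false_of_attached_of_attached_of_not_attached hG hasc hind h12 h13 h23 hS hN a₁ a₂ h₃
        h31 h32
    · exact false_of_attached_of_not_attached_of_adj_of_adj hG hasc hind h12 h13 h23 a₁ a₂ h₃
        h31 h32
    · exact false_of_attached_of_not_attached_of_adj_of_adj hG hasc hind h12.symm h23 h13 a₂ a₁ h₃
        h32 h31
    · exact some_attached.elim a₁ a₂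
  by_cases a₁ : Attached H t₁
  · exact false_of_not_attached_of_adj_of_not_adj hG hasc hind h12 h13 h23 a₁ h₃ h31 h32
  by_cases h12a : H.Adj (inr t₁) (inr t₂)
  · exact false_of_attached_of_not_attached_of_path hG hasc hind h12.symm h23 h13
      (some_attached.resolve_left a₁) a₁ h₃ h12a.symm h31.symm fun h => h32 h.symm
  -- Now `{t₁, t₃}` would be a connected component of `H`.
  obtain ⟨_, ha, y | s, hb, hab⟩ := hasc.1.exists_adj_mem_notMem {inr t₁, inr t₃}
    (Or.inl rfl) (show inl x ∉ {inr t₁, inr t₃} by simp)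
  · rcases ha with rfl | rfl
    exacts [a₁ ⟨y, hab⟩, h₃ ⟨y, hab⟩]
  · rcases ha with rfl | rfl <;>
      rcases Fin.eq_or_eq_or_eq_of_ne h12 h13 h23 s with rfl | rfl | rfl <;> simp_all

section AllAttached

variable (hall : ∀ t, Attached H t)
include hall

omit h12 h13 h23 in
lemma dist_inr_inl_le_three (t : Fin 3) (x : V) : H.dist (inr t) (inl x) ≤ 3 := by
  obtain ⟨y, hy⟩ := hall t
  have := hasc.1.dist_le_dist_add_one_of_adj hy (inl x)
  have := dist_inl_inl_le_two hG hasc hind y x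
  omega

omit h12 h13 h23 in
lemma ecc_eq_two_of_forall_attached (z : V) : ecc G z = 2 := by
  obtain ⟨t, ht⟩ := exists_three_le_dist_inr_inl hG hasc hind z
  obtain ⟨x, hx⟩ := hall t
  obtain ⟨hne, hnadj⟩ := ne_and_not_adj_of_adj_of_three_le_dist hasc hind hx ht
  exact ecc_eq_two_of_ne_of_not_adj hG hne.symm fun h => hnadj h.symm

lemma false_of_adj_of_adj_of_forall_attached {x : V} (h₁ : H.Adj (inr t₁) (inl x))
    (h₂ : H.Adj (inr t₂) (inl x)) : False := by
  obtain ⟨w, hw⟩ := hall t₃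
  refine false_of_forall_adj_or_adj hG hasc hind x w fun t => ?_
  rcases Fin.eq_or_eq_or_eq_of_ne h12 h13 h23 t with rfl | rfl | rfl
  exacts [Or.inl h₁, Or.inl h₂, Or.inr hw]

lemma exists_path_of_dist_le_three (hno : ∀ s s', ¬H.Adj (inr s) (inr s'))
    (hd : H.dist (inr t₁) (inr t₃) ≤ 3) :
    ∃ y x, H.Adj (inr t₁) (inl y) ∧ G.Adj y x ∧ H.Adj (inr t₃) (inl x) ∧
      3 ≤ H.dist (inr t₂) (inl x) := by
  have hc := hasc.1
  obtain ⟨y | s, hy, hyd⟩ := hc.exists_adj_dist_add_one_le (show inr t₁ ≠ inr t₃ by simpa using h13)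
  swap
  · exact absurd hy (hno _ _)
  obtain ⟨x | s, hx, hxd⟩ := hc.exists_adj_dist_add_one_le (show inl y ≠ inr t₃ by simp)
  · have hx₃ := (hc.adj_of_dist_le_one (by simp) (by omega : H.dist (inl x) (inr t₃) ≤ 1)).symm
    refine ⟨y, x, hy, (hind y x).mp hx, hx₃, three_le_dist_of_le_two hG hasc hind h13 h12 h23.symm
      (hc.dist_le_two_of_adj_of_adj hy hx) (hx₃.dist_eq_one.trans_le one_le_two)⟩
  · by_cases hs : s = t₃
    · subst hs
      exact (false_of_adj_of_adj_of_forall_attached hG hasc hind h13 h12 h23.symm hall hy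
        hx.symm).elim
    · exact absurd (hc.adj_of_dist_le_one (by simpa using hs) (by omega)) (hno _ _)

end AllAttached

end ThreeAdded

section ThreeAddedCases

variable {V : Type*} {G : SimpleGraph V} {H : SimpleGraph (V ⊕ Fin 3)} (hasc : IsASC 3 H)
  (hind : ∀ x y, H.Adj (inl x) (inl y) ↔ G.Adj x y)
include hasc hind

lemma newAddedHyp_of_forall_attached (hdiam : graphDiam G = 2) (hall : ∀ t, Attached H t)
    (hno : ∀ s s', ¬H.Adj (inr s) (inr s')) : NewAddedHyp G := by
  have hG := edist_le_two_of_graphDiam hdiam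
  have hc := hasc.1
  obtain ⟨w, w', hww'⟩ := hasc.exists_lt_dist
  have inl_le : ∀ x w, H.dist (inl x) w ≤ 3 := by
    rintro x (y | t)
    · exact (dist_inl_inl_le_two hG hasc hind x y).trans (by norm_num)
    · exact SimpleGraph.dist_comm ▸ dist_inr_inl_le_three hG hasc hind hall t x
  obtain ⟨s₁, rfl⟩ : ∃ s, w = inr s := by
    rcases w with x | s
    · exact absurd (inl_le x w') (by omega)
    · exact ⟨s, rfl⟩
  obtain ⟨s₂, rfl⟩ : ∃ s, w' = inr s := by
    rcases w' with x | s
    · exact absurd (SimpleGraph.dist_comm ▸ inl_le x (inr s₁)) (by omega)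
    · exact ⟨s, rfl⟩
  have h12 : s₁ ≠ s₂ := by
    rintro rfl
    simp at hww'
  obtain ⟨s₃, h31, h32⟩ := Fin.exists_ne_and_ne_of_two_lt s₁ s₂ (by norm_num)
  have d13 : H.dist (inr s₁) (inr s₃) ≤ 3 := by
    by_contra! h
    exact h32 (inr_injective (hasc.eq_of_lt_dist_of_lt_dist h hww'))
  have d23 : H.dist (inr s₂) (inr s₃) ≤ 3 := by
    by_contra! h
    exact h31 (inr_injective (hasc.eq_of_lt_dist_of_lt_dist h (SimpleGraph.dist_comm ▸ hww')))
  obtain ⟨y₁, x₁, hy₁, hyx₁, hx₁, far₁⟩ :=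
    exists_path_of_dist_le_three hG hasc hind h12 h31.symm h32.symm hall hno d13
  obtain ⟨y₂, x₂, hy₂, hyx₂, hx₂, far₂⟩ :=
    exists_path_of_dist_le_three hG hasc hind h12.symm h32.symm h31.symm hall hno d23
  have hy : y₁ ≠ y₂ ∧ ¬G.Adj y₁ y₂ := by
    refine ne_and_not_adj_of_two_le_dist hasc hind ?_
    have := hc.dist_le_dist_add_one_of_adj hy₁ (inr s₂)
    have := hc.dist_le_dist_add_one_of_adj hy₂ (inl y₁)
    have : H.dist (inl y₁) (inr s₂) = H.dist (inr s₂) (inl y₁) := SimpleGraph.dist_comm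
    have : H.dist (inl y₂) (inl y₁) = H.dist (inl y₁) (inl y₂) := SimpleGraph.dist_comm
    omega
  have dist_le_two : ∀ {s y m}, H.Adj (inr s) (inl y) → G.Adj y m → H.dist (inr s) (inl m) ≤ 2 :=
    fun hs hm => hc.dist_le_two_of_adj_of_adj hs ((hind _ _).mpr hm)
  have not_adj_of_far : ∀ {s y x}, H.Adj (inr s) (inl y) → 3 ≤ H.dist (inr s) (inl x) →
      ¬G.Adj y x := fun hs hx hyx => by
    have := dist_le_two hs hyx
    omega
  have mem_eccSet : ∀ m, G.Adj y₁ m → G.Adj y₂ m → ∀ x, H.Adj (inr s₃) (inl x) →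
      m ∈ eccSet G x := fun m hm₁ hm₂ x hx =>
    mem_eccSet_of_adj_of_three_le_dist hG hasc hind hx (three_le_dist_of_le_two hG hasc hind
      h12 h31.symm h32.symm (dist_le_two hy₁ hm₁) (dist_le_two hy₂ hm₂))
  exact ⟨ecc_eq_two_of_forall_attached hG hasc hind hall, y₁, y₂, x₁, x₂,
    by rw [hdiam]; exact edist_eq_two_of_ne_of_not_adj hG hy.1 hy.2,
    ⟨hyx₁, not_adj_of_far hy₂ far₁⟩, ⟨hyx₂, not_adj_of_far hy₁ far₂⟩,
    fun m ⟨hm₁, hm₂⟩ => ⟨mem_eccSet m hm₁ hm₂ x₁ hx₁, mem_eccSet m hm₁ hm₂ x₂ hx₂⟩⟩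

lemma false_of_isASC_fin_three (hdiam : graphDiam G = 2) (hS : EccMeetHasNoIsolated G)
    (hN : EccMeetNeighborsCommon G) (hnot : ¬NewAddedHyp G) (x : V) : False := by
  have hG := edist_le_two_of_graphDiam hdiam
  by_cases hall : ∀ t, Attached H t
  · by_cases hno : ∀ s s', ¬H.Adj (inr s) (inr s')
    · exact hnot (newAddedHyp_of_forall_attached hasc hind hdiam hall hno)
    push Not at hno
    obtain ⟨s, s', h⟩ := hno
    have hss' : s ≠ s' := by
      rintro rfl
      exact H.irrefl h
    obtain ⟨r, hrs, hrs'⟩ := Fin.exists_ne_and_ne_of_two_lt s s' (by norm_num)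
    exact false_of_adj_of_attached hG hasc hind hss' hrs.symm hrs'.symm (hall s) (hall s') h
  push Not at hall
  obtain ⟨t, ht⟩ := hall
  obtain ⟨s, hs⟩ := exists_adj_inr_of_not_attached hasc x ht
  have hst : s ≠ t := by
    rintro rfl
    exact H.irrefl hs
  obtain ⟨r, hrs, hrt⟩ := Fin.exists_ne_and_ne_of_two_lt s t (by norm_num)
  exact false_of_not_attached_of_adj hG hasc hind hrs.symm hst hrt hS hN x ht hs

end ThreeAddedCases

theorem theta_three_of_union_of_complete_general {V : Type*} (G : SimpleGraph V)
    (hdiam : graphDiam G = 2)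
    (hcond : ∀ u v : V, u ≠ v → ¬ G.Adj u v →
      (∀ x ∈ eccSet G u ∩ eccSet G v,
        ∃ y ∈ eccSet G u ∩ eccSet G v, x ≠ y ∧ G.Adj x y) ∧
      (∀ x ∈ eccSet G u ∩ eccSet G v, ∀ y ∈ eccSet G u ∩ eccSet G v,
        ∀ z ∈ eccSet G u ∩ eccSet G v,
          x ≠ z → G.Adj x y → G.Adj y z → G.Adj x z) ∧
      (∀ x ∈ eccSet G u ∩ eccSet G v, ∀ w' : V, G.Adj x w' →
        w' ∉ eccSet G u ∩ eccSet G v → w' ∈ G.neighborSet u ∩ G.neighborSet v))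
    (hnot : ¬ NewAddedHyp G) :
    theta 3 G = 4 := by
  have hG := edist_le_two_of_graphDiam hdiam
  obtain ⟨u, v, hne, hnadj⟩ := exists_ne_not_adj_of_graphDiam hdiam
  have h4 : 4 ∈ {k | ∃ H : SimpleGraph (V ⊕ Fin k), IsASC 3 H ∧
      ∀ u v, H.Adj (inl u) (inl v) ↔ G.Adj u v} :=
    ⟨fourExtension G u, isASC_fourExtension hG hne hnadj, fun _ _ => fourExtension_adj_inl_inl⟩
  refine le_antisymm (Nat.sInf_le h4) (le_csInf ⟨4, h4⟩ ?_)
  rintro k ⟨H, hasc, hind⟩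
  by_contra! hk
  interval_cases k
  · exact false_of_isASC_fin_zero hG hasc hind u
  · exact false_of_isASC_fin_one hG hasc hind u
  · exact false_of_isASC_fin_two hG hasc hind u
  · exact false_of_isASC_fin_three hasc hind hdiam (fun u v h h' => (hcond u v h h').1)
      (fun u v h h' => (hcond u v h h').2.2) hnot u

/-- Suppose `G` has diameter 2 and for every pair of distinct non-adjacent vertices
`u, v`, the subgraph induced by `S = Ecc(u) ∩ Ecc(v)` is a disjoint union of complete
graphs each on at least two vertices (every vertex of `S` has a neighbor in `S`, and
adjacency within `S` is transitive), such that every neighbor outside `S` of a vertex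
of `S` belongs to `N(u) ∩ N(v)`. If moreover `G` does not satisfy the hypothesis of
the 2-SC theorem, then `θ_3(G) = 4`. -/
theorem theta_three_of_union_of_complete {V : Type*} [Fintype V] (G : SimpleGraph V)
    (hdiam : graphDiam G = 2)
    (hcond : ∀ u v : V, u ≠ v → ¬ G.Adj u v →
      (∀ x ∈ eccSet G u ∩ eccSet G v,
        ∃ y ∈ eccSet G u ∩ eccSet G v, x ≠ y ∧ G.Adj x y) ∧
      (∀ x ∈ eccSet G u ∩ eccSet G v, ∀ y ∈ eccSet G u ∩ eccSet G v,
        ∀ z ∈ eccSet G u ∩ eccSet G v,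
          x ≠ z → G.Adj x y → G.Adj y z → G.Adj x z) ∧
      (∀ x ∈ eccSet G u ∩ eccSet G v, ∀ w' : V, G.Adj x w' →
        w' ∉ eccSet G u ∩ eccSet G v → w' ∈ G.neighborSet u ∩ G.neighborSet v))
    (hnot : ¬ NewAddedHyp G) :
    theta 3 G = 4 :=
  theta_three_of_union_of_complete_general G hdiam hcond hnot

end AscPaper
end

section
/- For every integer n ≥ 9, the 3-ASC index of the path P_n satisfies θ_3(P_n) ≤ 2. -/
namespace SimpleGraph

variable {V : Type*} {G : SimpleGraph V} {u v w : V}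

theorem Adj.edist_le_edist_add_one (h : G.Adj u w) : G.edist u v ≤ G.edist w v + 1 := by
  calc G.edist u v ≤ G.edist u w + G.edist w v := G.edist_triangle
    _ = G.edist w v + 1 := by rw [edist_eq_one_iff_adj.mpr h, add_comm]

theorem Adj.eccent_le_eccent_add_one (h : G.Adj u w) : G.eccent u ≤ G.eccent w + 1 :=
  (eccent_le_iff _ _).mpr fun _ ↦ h.edist_le_edist_add_one.trans (by gcongr; exact edist_le_eccent)

theorem Adj.edist_le_one (h : G.Adj u v) : G.edist u v ≤ 1 :=
  (edist_eq_one_iff_adj.2 h).le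

theorem edist_le_two_of_adj_of_adj (h₁ : G.Adj u w) (h₂ : G.Adj w v) : G.edist u v ≤ 2 := by
  simpa using edist_le (.cons h₁ (.cons h₂ .nil))

theorem edist_le_three_of_adj (h : G.Adj u w) (hw : G.edist w v ≤ 2) : G.edist u v ≤ 3 :=
  h.edist_le_edist_add_one.trans (by grw [hw]; norm_num)

theorem eccent_eq_of_le_of_le_edist {k : ℕ∞} (hle : G.eccent u ≤ k) (hv : k ≤ G.edist u v) :
    G.eccent u = k :=
  le_antisymm hle (hv.trans edist_le_eccent)

theorem le_edist_add_one_of_forall_adj {k : ℕ∞} (hne : u ≠ v)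
    (h : ∀ w, G.Adj u w → k ≤ G.edist w v) : k + 1 ≤ G.edist u v := by
  by_cases hr : G.Reachable u v
  · obtain ⟨p, hp⟩ := hr.exists_walk_length_eq_edist
    cases p with
    | nil => exact absurd rfl hne
    | cons hadj q =>
      rw [← hp, Walk.length_cons, Nat.cast_succ]
      gcongr
      exact (h _ hadj).trans (edist_le q)
  · simp [edist_eq_top_of_not_reachable hr]

theorem two_le_edist (hne : u ≠ v) (hnadj : ¬ G.Adj u v) : 2 ≤ G.edist u v :=
  le_edist_add_one_of_forall_adj (k := 1) hne fun _ hw ↦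
    Order.one_le_iff_pos.mpr (edist_pos_of_ne <| by rintro rfl; exact hnadj hw)

theorem three_le_edist (hne : u ≠ v)
    (h : ∀ w, G.Adj u w → w ≠ v ∧ ¬ G.Adj w v) : 3 ≤ G.edist u v :=
  le_edist_add_one_of_forall_adj (k := 2) hne fun w hw ↦ two_le_edist (h w hw).1 (h w hw).2

end SimpleGraph

namespace AscPaper

open SimpleGraph Sum

section general

variable {V : Type*} {G : SimpleGraph V}

theorem ecc_eq_eccent : ecc G = G.eccent := rfl
theorem graphRadius_eq_radius : graphRadius G = G.radius := rfl

theorem isASC_of_eccent {r : ℕ} {x y z : V} (hxy : x ≠ y) (hzx : z ≠ x) (hzy : z ≠ y)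
    (hcenter : ∀ u, u ≠ x → u ≠ y → G.eccent u = r)
    (hx : r < G.eccent x) (hy : r < G.eccent y) : IsASC r G := by
  have hle : ∀ u, (r : ℕ∞) ≤ G.eccent u := fun u ↦ by
    by_cases hux : u = x; · exact hux ▸ hx.le
    by_cases huy : u = y; · exact huy ▸ hy.le
    exact (hcenter u hux huy).ge
  have hrad : G.radius = r := le_antisymm (hcenter z hzx hzy ▸ radius_le_eccent) (le_iInf hle)
  have : Nonempty V := ⟨z⟩
  refine ⟨connected_of_ediam_ne_top ?_, hrad, ?_⟩
  · refine ne_top_of_le_ne_top ?_ (ediam_le_two_mul_eccent z)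
    rw [hcenter z hzx hzy]; exact_mod_cast ENat.natCast_ne_top (2 * r)
  · rw [graphRadius_eq_radius, hrad, ← Set.ncard_pair hxy]
    congr 1
    ext u
    simp only [Set.mem_ofPred_eq, Set.mem_insert_iff, Set.mem_singleton_iff, ecc_eq_eccent]
    by_cases hux : u = x; · simp [hux, hx.ne']
    by_cases huy : u = y; · simp [huy, hy.ne']
    simp [hux, huy, hcenter u hux huy]

end general

/-- The path `P_n`, with `v_i = inl i`, together with the hubs `a = inr 0` and `b = inr 1`. -/
def pathWithHubs (n : ℕ) : SimpleGraph (Fin n ⊕ Fin 2) := SimpleGraph.fromRel fun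
  | inl i, inl j => (i : ℕ) + 1 = j
  | inl i, inr 0 => 3 ≤ (i : ℕ)
  | inl i, inr 1 => (i : ℕ) = 0 ∨ 4 ≤ (i : ℕ) ∧ (i : ℕ) + 2 ≤ n
  | inr 0, inr 1 => True
  | _, _ => False

section pathWithHubs
variable {n : ℕ} {i j : Fin n}

@[simp] theorem pathWithHubs_adj_inl_inl :
    (pathWithHubs n).Adj (inl i) (inl j) ↔ (i : ℕ) + 1 = j ∨ (j : ℕ) + 1 = i := by
  rw [pathWithHubs, fromRel_adj, ne_eq, inl.injEq, Fin.ext_iff]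
  omega

@[simp] theorem pathWithHubs_adj_inl_inr_zero :
    (pathWithHubs n).Adj (inl i) (inr 0) ↔ 3 ≤ (i : ℕ) := by
  simp [pathWithHubs]

@[simp] theorem pathWithHubs_adj_inl_inr_one :
    (pathWithHubs n).Adj (inl i) (inr 1) ↔ (i : ℕ) = 0 ∨ 4 ≤ (i : ℕ) ∧ (i : ℕ) + 2 ≤ n := by
  simp [pathWithHubs]

@[simp] theorem pathWithHubs_adj_inr_zero_inr_one : (pathWithHubs n).Adj (inr 0) (inr 1) := by
  simp [pathWithHubs]

@[simp] theorem pathWithHubs_adj_inr_zero_inl :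
    (pathWithHubs n).Adj (inr 0) (inl i) ↔ 3 ≤ (i : ℕ) := by
  rw [adj_comm, pathWithHubs_adj_inl_inr_zero]

@[simp] theorem pathWithHubs_adj_inr_one_inl :
    (pathWithHubs n).Adj (inr 1) (inl i) ↔ (i : ℕ) = 0 ∨ 4 ≤ (i : ℕ) ∧ (i : ℕ) + 2 ≤ n := by
  rw [adj_comm, pathWithHubs_adj_inl_inr_one]

theorem pathWithHubs_forall_adj_inl {P : Fin n ⊕ Fin 2 → Prop} :
    (∀ w, (pathWithHubs n).Adj (inl i) w → P w) ↔
      (∀ j : Fin n, (i : ℕ) + 1 = j ∨ (j : ℕ) + 1 = i → P (inl j)) ∧ (3 ≤ (i : ℕ) → P (inr 0)) ∧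
        ((i : ℕ) = 0 ∨ 4 ≤ (i : ℕ) ∧ (i : ℕ) + 2 ≤ n → P (inr 1)) := by
  simp [Sum.forall, Fin.forall_fin_two]

theorem inl_ne_inl_of_val_ne (h : (i : ℕ) ≠ j) : (inl i : Fin n ⊕ Fin 2) ≠ inl j :=
  inl_injective.ne (Fin.ne_of_val_ne h)

theorem edist_inr_zero_inl_le_two (hn : 4 ≤ n) (hi : (i : ℕ) ≠ 1) :
    (pathWithHubs n).edist (inr 0) (inl i) ≤ 2 := by
  by_cases hadj : (pathWithHubs n).Adj (inr 0) (inl i)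
  · exact hadj.edist_le_one.trans one_le_two
  rw [pathWithHubs_adj_inr_zero_inl] at hadj
  obtain h | h : (i : ℕ) = 0 ∨ (i : ℕ) = 2 := by omega
  · exact edist_le_two_of_adj_of_adj (w := inr 1) (by simp) (by simp [h])
  · exact edist_le_two_of_adj_of_adj (w := inl ⟨3, by omega⟩) (by simp)
      (by simp only [pathWithHubs_adj_inl_inl]; omega)

theorem edist_inr_one_inl_le_two (hn : 6 ≤ n) (hi : (i : ℕ) ≠ 2) :
    (pathWithHubs n).edist (inr 1) (inl i) ≤ 2 := by
  by_cases hadj : (pathWithHubs n).Adj (inr 1) (inl i)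
  · exact hadj.edist_le_one.trans one_le_two
  rw [pathWithHubs_adj_inr_one_inl] at hadj
  obtain h | h | h : (i : ℕ) = 1 ∨ (i : ℕ) = 3 ∨ (i : ℕ) = n - 1 := by omega
  · exact edist_le_two_of_adj_of_adj (w := inl ⟨0, by omega⟩) (by simp)
      (by simp only [pathWithHubs_adj_inl_inl]; omega)
  · exact edist_le_two_of_adj_of_adj (w := inl ⟨4, by omega⟩)
      (by simp only [pathWithHubs_adj_inr_one_inl]; omega)
      (by simp only [pathWithHubs_adj_inl_inl]; omega)
  · exact edist_le_two_of_adj_of_adj (w := inl ⟨n - 2, by omega⟩)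
      (by simp only [pathWithHubs_adj_inr_one_inl]; omega)
      (by simp only [pathWithHubs_adj_inl_inl]; omega)

theorem eccent_inr_zero_le (hn : 4 ≤ n) : (pathWithHubs n).eccent (inr 0) ≤ 3 := by
  rw [eccent_le_iff]
  rintro (j | k)
  · by_cases hj : (j : ℕ) = 1
    · exact edist_le_three_of_adj (w := inl ⟨3, by omega⟩) (by simp) <|
        edist_le_two_of_adj_of_adj (w := inl ⟨2, by omega⟩) (by simp)
          (by simp only [pathWithHubs_adj_inl_inl]; omega)
    · exact (edist_inr_zero_inl_le_two hn hj).trans (by norm_num)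
  · fin_cases k
    · simp
    · exact pathWithHubs_adj_inr_zero_inr_one.edist_le_one.trans (by norm_num)

theorem eccent_inr_one_le (hn : 6 ≤ n) : (pathWithHubs n).eccent (inr 1) ≤ 3 := by
  rw [eccent_le_iff]
  rintro (j | k)
  · by_cases hj : (j : ℕ) = 2
    · exact edist_le_three_of_adj pathWithHubs_adj_inr_zero_inr_one.symm
        (edist_inr_zero_inl_le_two (by omega) (by omega))
    · exact (edist_inr_one_inl_le_two hn hj).trans (by norm_num)
  · fin_cases k
    · exact pathWithHubs_adj_inr_zero_inr_one.symm.edist_le_one.trans (by norm_num)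
    · simp

theorem eccent_inl_zero_le (hn : 6 ≤ n) (hi : (i : ℕ) = 0) :
    (pathWithHubs n).eccent (inl i) ≤ 3 := by
  have hb : (pathWithHubs n).Adj (inl i) (inr 1) := pathWithHubs_adj_inl_inr_one.2 (.inl hi)
  rw [eccent_le_iff]
  rintro (j | k)
  · by_cases hj : (j : ℕ) = 2
    · exact (edist_le_two_of_adj_of_adj (w := inl ⟨1, by omega⟩)
        (by simp only [pathWithHubs_adj_inl_inl]; omega)
        (by simp only [pathWithHubs_adj_inl_inl]; omega)).trans (by norm_num)
    · exact edist_le_three_of_adj hb (edist_inr_one_inl_le_two hn hj)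
  · fin_cases k
    · exact (edist_le_two_of_adj_of_adj hb pathWithHubs_adj_inr_zero_inr_one.symm).trans
        (by norm_num)
    · exact hb.edist_le_one.trans (by norm_num)

theorem eccent_inl_two_le (hn : 4 ≤ n) (hi : (i : ℕ) = 2) :
    (pathWithHubs n).eccent (inl i) ≤ 3 := by
  have hv₃ : (pathWithHubs n).Adj (inl i) (inl ⟨3, by omega⟩) := by
    simp only [pathWithHubs_adj_inl_inl]; omega
  have hv₃a : (pathWithHubs n).Adj (inl ⟨3, by omega⟩) (inr 0) := by simp
  rw [eccent_le_iff]
  rintro (j | k)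
  · obtain h | h | h | h : (j : ℕ) = 0 ∨ (j : ℕ) = 1 ∨ (j : ℕ) = 2 ∨ 3 ≤ (j : ℕ) := by omega
    · exact (edist_le_two_of_adj_of_adj (w := inl ⟨1, by omega⟩)
        (by simp only [pathWithHubs_adj_inl_inl]; omega)
        (by simp only [pathWithHubs_adj_inl_inl]; omega)).trans (by norm_num)
    · exact (pathWithHubs_adj_inl_inl.2 (by omega)).edist_le_one.trans (by norm_num)
    · simp [show j = i from Fin.ext (by omega)]
    · exact edist_le_three_of_adj hv₃
        (edist_le_two_of_adj_of_adj hv₃a (pathWithHubs_adj_inr_zero_inl.2 h))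
  · fin_cases k
    · exact (edist_le_two_of_adj_of_adj hv₃ hv₃a).trans (by norm_num)
    · exact edist_le_three_of_adj hv₃
        (edist_le_two_of_adj_of_adj hv₃a pathWithHubs_adj_inr_zero_inr_one)

theorem eccent_inl_three_le (hn : 4 ≤ n) (hi : (i : ℕ) = 3) :
    (pathWithHubs n).eccent (inl i) ≤ 3 := by
  have ha : (pathWithHubs n).Adj (inl i) (inr 0) := pathWithHubs_adj_inl_inr_zero.2 hi.ge
  have hv₂ : (pathWithHubs n).Adj (inl i) (inl ⟨2, by omega⟩) := by
    simp only [pathWithHubs_adj_inl_inl]; omega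
  rw [eccent_le_iff]
  rintro (j | k)
  · obtain h | h | h | h : (j : ℕ) = 0 ∨ (j : ℕ) = 1 ∨ (j : ℕ) = 2 ∨ 3 ≤ (j : ℕ) := by omega
    · exact edist_le_three_of_adj hv₂ <| edist_le_two_of_adj_of_adj (w := inl ⟨1, by omega⟩)
        (by simp) (by simp only [pathWithHubs_adj_inl_inl]; omega)
    · exact (edist_le_two_of_adj_of_adj hv₂
        (by simp only [pathWithHubs_adj_inl_inl]; omega)).trans (by norm_num)
    · exact (pathWithHubs_adj_inl_inl.2 (by omega)).edist_le_one.trans (by norm_num)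
    · exact (edist_le_two_of_adj_of_adj ha (pathWithHubs_adj_inr_zero_inl.2 h)).trans
        (by norm_num)
  · fin_cases k
    · exact ha.edist_le_one.trans (by norm_num)
    · exact (edist_le_two_of_adj_of_adj ha pathWithHubs_adj_inr_zero_inr_one).trans
        (by norm_num)

theorem eccent_inl_le_of_four_le (hi : 4 ≤ (i : ℕ)) (hi' : (i : ℕ) + 2 ≤ n) :
    (pathWithHubs n).eccent (inl i) ≤ 3 := by
  have ha : (pathWithHubs n).Adj (inl i) (inr 0) := pathWithHubs_adj_inl_inr_zero.2 (by omega)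
  have hb : (pathWithHubs n).Adj (inl i) (inr 1) := pathWithHubs_adj_inl_inr_one.2 (by omega)
  rw [eccent_le_iff]
  rintro (j | k)
  · by_cases hj : (j : ℕ) = 1
    · exact edist_le_three_of_adj hb (edist_inr_one_inl_le_two (by omega) (by omega))
    · exact edist_le_three_of_adj ha (edist_inr_zero_inl_le_two (by omega) hj)
  · fin_cases k
    · exact ha.edist_le_one.trans (by norm_num)
    · exact hb.edist_le_one.trans (by norm_num)

theorem three_le_edist_inl_one_inr_zero (hi : (i : ℕ) = 1) :
    3 ≤ (pathWithHubs n).edist (inl i) (inr 0) :=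
  three_le_edist inl_ne_inr <| pathWithHubs_forall_adj_inl.2
    ⟨fun _ _ ↦ ⟨inl_ne_inr, by rw [pathWithHubs_adj_inl_inr_zero]; omega⟩, by omega, by omega⟩

theorem three_le_edist_inl_two_inr_one (hi : (i : ℕ) = 2) :
    3 ≤ (pathWithHubs n).edist (inl i) (inr 1) :=
  three_le_edist inl_ne_inr <| pathWithHubs_forall_adj_inl.2
    ⟨fun _ _ ↦ ⟨inl_ne_inr, by rw [pathWithHubs_adj_inl_inr_one]; omega⟩, by omega, by omega⟩

theorem three_le_edist_inl_zero_inl_three (hi : (i : ℕ) = 0) (hj : (j : ℕ) = 3) :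
    3 ≤ (pathWithHubs n).edist (inl i) (inl j) :=
  three_le_edist (inl_ne_inl_of_val_ne (by omega)) <| pathWithHubs_forall_adj_inl.2
    ⟨fun _ _ ↦ ⟨inl_ne_inl_of_val_ne (by omega), by rw [pathWithHubs_adj_inl_inl]; omega⟩,
      by omega, fun _ ↦ ⟨inr_ne_inl, by rw [pathWithHubs_adj_inr_one_inl]; omega⟩⟩

theorem three_le_edist_inl_one_inl_of_four_le (hi : (i : ℕ) = 1) (hj : 4 ≤ (j : ℕ)) :
    3 ≤ (pathWithHubs n).edist (inl i) (inl j) :=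
  three_le_edist (inl_ne_inl_of_val_ne (by omega)) <| pathWithHubs_forall_adj_inl.2
    ⟨fun _ _ ↦ ⟨inl_ne_inl_of_val_ne (by omega), by rw [pathWithHubs_adj_inl_inl]; omega⟩,
      by omega, by omega⟩

theorem four_le_edist_inl_one_inl_last (hn : 6 ≤ n) (hi : (i : ℕ) = 1) (hj : (j : ℕ) = n - 1) :
    4 ≤ (pathWithHubs n).edist (inl i) (inl j) := by
  refine le_edist_add_one_of_forall_adj (k := 3) (inl_ne_inl_of_val_ne (by omega)) <|
    pathWithHubs_forall_adj_inl.2 ⟨fun k hk ↦ ?_, by omega, by omega⟩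
  exact three_le_edist (inl_ne_inl_of_val_ne (by omega)) <| pathWithHubs_forall_adj_inl.2
    ⟨fun _ _ ↦ ⟨inl_ne_inl_of_val_ne (by omega), by rw [pathWithHubs_adj_inl_inl]; omega⟩,
      by omega, fun _ ↦ ⟨inr_ne_inl, by rw [pathWithHubs_adj_inr_one_inl]; omega⟩⟩

theorem eccent_pathWithHubs_eq_three (hn : 6 ≤ n) {u : Fin n ⊕ Fin 2}
    (hu : ∀ i : Fin n, u = inl i → (i : ℕ) ≠ 1 ∧ (i : ℕ) ≠ n - 1) :
    (pathWithHubs n).eccent u = 3 := by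
  rcases u with i | k
  · have hi := hu i rfl
    obtain h | h | h | ⟨h, h'⟩ :
        (i : ℕ) = 0 ∨ (i : ℕ) = 2 ∨ (i : ℕ) = 3 ∨ 4 ≤ (i : ℕ) ∧ (i : ℕ) + 2 ≤ n := by omega
    · exact eccent_eq_of_le_of_le_edist (eccent_inl_zero_le hn h)
        (three_le_edist_inl_zero_inl_three (j := ⟨3, by omega⟩) h rfl)
    · exact eccent_eq_of_le_of_le_edist (eccent_inl_two_le (by omega) h)
        (three_le_edist_inl_two_inr_one h)
    · exact eccent_eq_of_le_of_le_edist (eccent_inl_three_le (by omega) h)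
        (edist_comm ▸ three_le_edist_inl_zero_inl_three (i := ⟨0, by omega⟩) rfl h)
    · exact eccent_eq_of_le_of_le_edist (eccent_inl_le_of_four_le h h')
        (edist_comm ▸ three_le_edist_inl_one_inl_of_four_le (i := ⟨1, by omega⟩) rfl h)
  · fin_cases k
    · exact eccent_eq_of_le_of_le_edist (eccent_inr_zero_le (by omega))
        (edist_comm ▸ three_le_edist_inl_one_inr_zero (i := ⟨1, by omega⟩) rfl)
    · exact eccent_eq_of_le_of_le_edist (eccent_inr_one_le hn)
        (edist_comm ▸ three_le_edist_inl_two_inr_one (i := ⟨2, by omega⟩) rfl)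

theorem eccent_pathWithHubs_inl_eq_four (hn : 6 ≤ n) (hi : (i : ℕ) = 1 ∨ (i : ℕ) = n - 1) :
    (pathWithHubs n).eccent (inl i) = 4 := by
  rcases hi with h | h
  · have hv₀ : (pathWithHubs n).Adj (inl i) (inl ⟨0, by omega⟩) := by
      simp only [pathWithHubs_adj_inl_inl]; omega
    refine eccent_eq_of_le_of_le_edist ?_
      (four_le_edist_inl_one_inl_last (j := ⟨n - 1, by omega⟩) hn h rfl)
    grw [hv₀.eccent_le_eccent_add_one, eccent_inl_zero_le hn rfl]
    norm_num
  · have ha : (pathWithHubs n).Adj (inl i) (inr 0) := pathWithHubs_adj_inl_inr_zero.2 (by omega)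
    refine eccent_eq_of_le_of_le_edist ?_
      (edist_comm ▸ four_le_edist_inl_one_inl_last (i := ⟨1, by omega⟩) hn rfl h)
    grw [ha.eccent_le_eccent_add_one, eccent_inr_zero_le (by omega)]
    norm_num

theorem isASC_pathWithHubs (hn : 6 ≤ n) : IsASC 3 (pathWithHubs n) := by
  refine isASC_of_eccent (x := inl ⟨1, by omega⟩) (y := inl ⟨n - 1, by omega⟩) (z := inr 0)
    (inl_ne_inl_of_val_ne (show 1 ≠ n - 1 by omega)) inr_ne_inl inr_ne_inl
    (fun u hx hy ↦ eccent_pathWithHubs_eq_three hn ?_) ?_ ?_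
  · rintro i rfl
    exact ⟨fun h ↦ hx (congrArg inl (Fin.ext h)), fun h ↦ hy (congrArg inl (Fin.ext h))⟩
  · rw [eccent_pathWithHubs_inl_eq_four hn (.inl rfl)]; norm_num
  · rw [eccent_pathWithHubs_inl_eq_four hn (.inr rfl)]; norm_num

end pathWithHubs

/-- For every integer `n ≥ 9`, the 3-ASC index of the path `P_n` satisfies
`θ_3(P_n) ≤ 2`. -/
theorem theta_three_path_le (n : ℕ) (hn : 9 ≤ n) :
    theta 3 (pathGraph n) ≤ 2 :=
  Nat.sInf_le ⟨pathWithHubs n, isASC_pathWithHubs (by omega), fun _ _ ↦ by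
    rw [pathWithHubs_adj_inl_inl, pathGraph_adj]⟩

end AscPaper
end

section
/- For every integer n ≥ 9, the 3-ASC index of the path P_n satisfies θ_3(P_n) ≥ 2. -/
namespace SimpleGraph

variable {V : Type*} {G : SimpleGraph V}

theorem natCast_le_edist_of_adj_le_succ (φ : V → ℕ) (hφ : ∀ x y, G.Adj x y → φ y ≤ φ x + 1)
    {s t : V} (hs : φ s = 0) : (φ t : ℕ∞) ≤ G.edist s t := by
  have hwalk : ∀ {x y : V} (p : G.Walk x y), φ y ≤ φ x + p.length := by
    intro x y p
    induction p with
    | nil => simp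
    | cons h _ ih => have := hφ _ _ h; rw [Walk.length_cons]; omega
  refine le_iInf fun p => ?_
  have := hwalk p
  exact_mod_cast (by omega : φ t ≤ p.length)

theorem edist_eq_of_adj_descent (d : V → V → ℕ) (hself : ∀ z, d z z = 0)
    (hlip : ∀ x y z, G.Adj x y → d y z ≤ d x z + 1)
    (hdesc : ∀ x z, x ≠ z → ∃ y, G.Adj x y ∧ d y z + 1 = d x z) (x z : V) :
    G.edist x z = d x z := by
  refine le_antisymm ?_ ?_
  · suffices ∀ k x, d x z = k → G.edist x z ≤ k from this _ x rfl
    intro k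
    induction k with
    | zero =>
      intro x hx
      by_cases hxz : x = z
      · simp [hxz]
      · obtain ⟨y, -, hy⟩ := hdesc x z hxz
        omega
    | succ k ih =>
      intro x hx
      have hxz : x ≠ z := by rintro rfl; rw [hself] at hx; omega
      obtain ⟨y, hxy, hy⟩ := hdesc x z hxz
      calc G.edist x z ≤ G.edist x y + G.edist y z := G.edist_triangle
        _ ≤ 1 + k := add_le_add (edist_eq_one_iff_adj.mpr hxy).le (ih y (by omega))
        _ = (k + 1 : ℕ) := by push_cast; ring
  · rw [edist_comm]
    exact natCast_le_edist_of_adj_le_succ (d · z) (fun x y h => hlip x y z h) (hself z)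

variable {U W : Type*} {K : SimpleGraph U} {H : SimpleGraph W} {f : W → U}

theorem edist_le_edist_of_adj_or_eq (hproj : ∀ a b, H.Adj a b → K.Adj (f a) (f b) ∨ f a = f b)
    (a b : W) : K.edist (f a) (f b) ≤ H.edist a b := by
  have hwalk : ∀ {x y : W} (p : H.Walk x y), K.edist (f x) (f y) ≤ p.length := by
    intro x y p
    induction p with
    | nil => simp
    | cons h _ ih =>
      rename_i x y _ _
      calc K.edist (f x) _ ≤ K.edist (f x) (f y) + K.edist (f y) _ := K.edist_triangle
        _ ≤ 1 + _ := add_le_add (edist_le_one_iff_adj_or_eq.mpr (hproj _ _ h)) ih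
        _ = _ := by rw [Walk.length_cons]; push_cast; ring
  exact le_iInf fun p => hwalk p

section Lift

variable (hsurj : Function.Surjective f) (hlift : ∀ a b, K.Adj (f a) (f b) → H.Adj a b)
include hsurj hlift

theorem edist_le_edist_of_ne {a b : W} (hab : f a ≠ f b) :
    H.edist a b ≤ K.edist (f a) (f b) := by
  have hwalk : ∀ {i j : U} (p : K.Walk i j) (a b : W), f a = i → f b = j → i ≠ j →
      H.edist a b ≤ p.length := by
    intro i j p
    induction p with
    | nil => intro _ _ _ _ h; exact absurd rfl h
    | cons h q ih =>
      rename_i i k j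
      intro a b ha hb _
      obtain ⟨c, rfl⟩ := hsurj k
      subst ha hb
      have hac : H.edist a c ≤ 1 := (edist_eq_one_iff_adj.mpr (hlift a c h)).le
      by_cases hcb : f c = f b
      · rw [hcb] at h
        exact (edist_eq_one_iff_adj.mpr (hlift a b h)).le.trans (by simp)
      calc H.edist a b ≤ H.edist a c + H.edist c b := H.edist_triangle
        _ ≤ 1 + q.length := add_le_add hac (ih c b rfl rfl hcb)
        _ = _ := by rw [Walk.length_cons]; push_cast; ring
  by_cases hr : K.Reachable (f a) (f b)
  · obtain ⟨p, hp⟩ := hr.exists_walk_length_eq_edist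
    exact hp ▸ hwalk p a b rfl rfl hab
  · simp [edist_eq_top_of_not_reachable hr]

theorem edist_le_two_of_eq {a b : W} (hab : f a = f b) {j : U} (hj : K.Adj (f a) j) :
    H.edist a b ≤ 2 := by
  obtain ⟨c, rfl⟩ := hsurj j
  calc H.edist a b ≤ H.edist a c + H.edist c b := H.edist_triangle
    _ ≤ 1 + 1 := by
      refine add_le_add (edist_eq_one_iff_adj.mpr (hlift a c hj)).le
        (edist_eq_one_iff_adj.mpr (hlift c b ?_)).le
      exact hab ▸ hj.symm
    _ = 2 := by norm_num

end Lift

section Blowup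

variable (hsurj : Function.Surjective f) (hlift : ∀ a b, K.Adj (f a) (f b) → H.Adj a b)
  (hproj : ∀ a b, H.Adj a b → K.Adj (f a) (f b) ∨ f a = f b)
  (hK : K.Preconnected) (hK₂ : ∀ i, 2 ≤ K.eccent i)
include hsurj hlift hK hK₂

theorem edist_le_max_two (a b : W) : H.edist a b ≤ max 2 (K.edist (f a) (f b)) := by
  have : Nontrivial U := (K.eccent_pos_iff (f a)).mp (lt_of_lt_of_le (by norm_num) (hK₂ _))
  by_cases hab : f a = f b
  · obtain ⟨j, hj⟩ := hK.exists_adj_of_nontrivial (f a)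
    exact (edist_le_two_of_eq hsurj hlift hab hj).trans (le_max_left _ _)
  · exact (edist_le_edist_of_ne hsurj hlift hab).trans (le_max_right _ _)

theorem preconnected_of_blowup : H.Preconnected := fun a b => by
  have hfin : max 2 (K.edist (f a) (f b)) ≠ ⊤ :=
    max_ne_top (by simp) (edist_ne_top_iff_reachable.mpr (hK _ _))
  exact reachable_of_edist_ne_top
    (ne_top_of_le_ne_top hfin (edist_le_max_two hsurj hlift hK hK₂ a b))

include hproj in
theorem eccent_eq_of_blowup (a : W) : H.eccent a = K.eccent (f a) := by
  refine le_antisymm ((eccent_le_iff _ _).mpr fun b => ?_) ((eccent_le_iff _ _).mpr fun j => ?_)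
  · exact (edist_le_max_two hsurj hlift hK hK₂ a b).trans (max_le (hK₂ _) edist_le_eccent)
  · obtain ⟨b, rfl⟩ := hsurj j
    exact (edist_le_edist_of_adj_or_eq hproj a b).trans edist_le_eccent

include hproj in
theorem radius_eq_of_blowup : H.radius = K.radius := by
  simp only [radius, eccent_eq_of_blowup hsurj hlift hproj hK hK₂]
  exact hsurj.iInf_comp K.eccent

end Blowup

end SimpleGraph

namespace AscPaper

open SimpleGraph Sum

theorem isASC_iff {V : Type*} {r : ℕ} {H : SimpleGraph V} :
    IsASC r H ↔ H.Connected ∧ H.radius = r ∧ H.centerᶜ.ncard = 2 := Iff.rfl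

section Twins

variable {V U : Type*}

def twinMap (i : U) : V ⊕ U → U := Sum.elim (fun _ => i) id

/-- `K` with every vertex of `G` added as a twin of `i`, keeping the edges of `G`. -/
def twinExtension (G : SimpleGraph V) (K : SimpleGraph U) (i : U) : SimpleGraph (V ⊕ U) :=
  K.comap (twinMap i) ⊔ G.map Function.Embedding.inl

variable (G : SimpleGraph V) (K : SimpleGraph U) (i : U)

theorem twinExtension_adj_inl {u v : V} :
    (twinExtension G K i).Adj (inl u) (inl v) ↔ G.Adj u v := by
  simp [twinExtension, twinMap]

theorem twinMap_surjective : Function.Surjective (twinMap (V := V) i) := fun j => ⟨inr j, rfl⟩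

theorem adj_twinExtension_of_adj_twinMap (a b : V ⊕ U) (h : K.Adj (twinMap i a) (twinMap i b)) :
    (twinExtension G K i).Adj a b :=
  Or.inl h

theorem adj_twinMap_or_eq_of_adj (a b : V ⊕ U) (h : (twinExtension G K i).Adj a b) :
    K.Adj (twinMap i a) (twinMap i b) ∨ twinMap i a = twinMap i b := by
  rcases h with h | ⟨-, u, v, -, rfl, rfl⟩
  · exact Or.inl h
  · exact Or.inr rfl

theorem isASC_twinExtension {r : ℕ} (hr : 2 ≤ r) (hK : IsASC r K) (hi : K.eccent i = K.radius) :
    IsASC r (twinExtension G K i) := by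
  obtain ⟨hconn, hrad, hcard⟩ := isASC_iff.mp hK
  have hK₂ : ∀ j, 2 ≤ K.eccent j := fun j =>
    le_trans (by rw [hrad]; exact_mod_cast hr) K.radius_le_eccent
  have hsurj := twinMap_surjective (V := V) i
  have hlift := adj_twinExtension_of_adj_twinMap G K i
  have hproj := adj_twinMap_or_eq_of_adj G K i
  have hecc := eccent_eq_of_blowup hsurj hlift hproj hconn.preconnected hK₂
  have hrad' := radius_eq_of_blowup hsurj hlift hproj hconn.preconnected hK₂
  have hcenter : (twinExtension G K i).centerᶜ = inr '' K.centerᶜ := by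
    ext (u | j)
    · simp [mem_center_iff, hecc, hrad', twinMap, hi]
    · simp [mem_center_iff, hecc, hrad', twinMap]
  refine isASC_iff.mpr ⟨?_, hrad'.trans hrad, ?_⟩
  · exact (connected_iff _).mpr
      ⟨preconnected_of_blowup hsurj hlift hconn.preconnected hK₂, ⟨inr hconn.nonempty.some⟩⟩
  · rw [hcenter, Set.ncard_image_of_injective _ inr_injective, hcard]

theorem exists_isASC_induced_extension {r : ℕ} (hr : 2 ≤ r) (hK : IsASC r K) :
    ∃ H : SimpleGraph (V ⊕ U), IsASC r H ∧ ∀ u v : V, H.Adj (inl u) (inl v) ↔ G.Adj u v := by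
  have : Nonempty U := hK.1.nonempty
  obtain ⟨i, hi⟩ := K.exists_eccent_eq_radius
  exact ⟨twinExtension G K i, isASC_twinExtension G K i hr hK hi,
    fun _ _ => twinExtension_adj_inl G K i⟩

end Twins

def cycleSixPendantEdges : List (Fin 7 × Fin 7) :=
  [(0, 1), (1, 2), (2, 3), (3, 4), (4, 5), (5, 0), (0, 6)]

def cycleSixPendant : SimpleGraph (Fin 7) where
  Adj i j := (i, j) ∈ cycleSixPendantEdges ∨ (j, i) ∈ cycleSixPendantEdges
  symm := ⟨fun _ _ => Or.symm⟩
  loopless := ⟨by decide⟩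

instance : DecidableRel cycleSixPendant.Adj := fun _ _ => inferInstanceAs (Decidable (_ ∨ _))

def cycleSixPendantDist : Fin 7 → Fin 7 → ℕ :=
  ![![0, 1, 2, 3, 2, 1, 1],
    ![1, 0, 1, 2, 3, 2, 2],
    ![2, 1, 0, 1, 2, 3, 3],
    ![3, 2, 1, 0, 1, 2, 4],
    ![2, 3, 2, 1, 0, 1, 3],
    ![1, 2, 3, 2, 1, 0, 2],
    ![1, 2, 3, 4, 3, 2, 0]]

theorem cycleSixPendant_edist (i j : Fin 7) :
    cycleSixPendant.edist i j = cycleSixPendantDist i j :=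
  edist_eq_of_adj_descent _ (by decide) (by decide) (by decide) i j

def cycleSixPendantEccent : Fin 7 → ℕ := ![3, 3, 3, 4, 3, 3, 4]

theorem cycleSixPendant_eccent (i : Fin 7) :
    cycleSixPendant.eccent i = cycleSixPendantEccent i := by
  refine le_antisymm ((eccent_le_iff _ _).mpr fun j => ?_) ?_
  · rw [cycleSixPendant_edist]
    exact_mod_cast (by decide : ∀ i j, cycleSixPendantDist i j ≤ cycleSixPendantEccent i) i j
  · obtain ⟨j, hj⟩ := (by decide : ∀ i, ∃ j, cycleSixPendantDist i j = cycleSixPendantEccent i) i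
    rw [← hj, ← cycleSixPendant_edist]
    exact edist_le_eccent

theorem cycleSixPendant_radius : cycleSixPendant.radius = 3 := by
  refine le_antisymm ?_ (le_iInf fun i => ?_)
  · simpa [cycleSixPendant_eccent, cycleSixPendantEccent] using
      (radius_le_eccent (G := cycleSixPendant) (u := 0))
  · rw [cycleSixPendant_eccent]
    exact_mod_cast (by decide : ∀ i, 3 ≤ cycleSixPendantEccent i) i

theorem isASC_cycleSixPendant : IsASC 3 cycleSixPendant := by
  refine isASC_iff.mpr ⟨(connected_iff _).mpr ⟨fun i j => ?_, ⟨0⟩⟩, cycleSixPendant_radius, ?_⟩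
  · exact reachable_of_edist_ne_top (by simp [cycleSixPendant_edist])
  · have : cycleSixPendant.centerᶜ = {3, 6} := by
      ext i
      simp only [Set.mem_compl_iff, mem_center_iff, cycleSixPendant_eccent,
        cycleSixPendant_radius, Set.mem_insert_iff, Set.mem_singleton_iff]
      revert i
      decide
    rw [this, Set.ncard_pair (by decide)]

theorem exists_pair_four_le_dist {n : ℕ} (hn : 9 ≤ n) (z : Fin n) :
    ∃ v₁ v₂ : Fin n, v₁ ≠ v₂ ∧ 4 ≤ Nat.dist z v₁ ∧ 4 ≤ Nat.dist z v₂ := by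
  rcases (by omega : z.val ≤ 3 ∨ z.val = 4 ∨ 5 ≤ z.val) with h | h | h
  · refine ⟨⟨n - 1, by omega⟩, ⟨n - 2, by omega⟩, ?_, ?_, ?_⟩ <;>
      simp only [ne_eq, Fin.ext_iff, Nat.dist] <;> omega
  · refine ⟨⟨0, by omega⟩, ⟨n - 1, by omega⟩, ?_, ?_, ?_⟩ <;>
      simp only [ne_eq, Fin.ext_iff, Nat.dist] <;> omega
  · refine ⟨⟨0, by omega⟩, ⟨1, by omega⟩, ?_, ?_, ?_⟩ <;>
      simp only [ne_eq, Fin.ext_iff, Nat.dist] <;> omega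

section PathPlusFewVertices

variable {n : ℕ} {W : Type*} {H : SimpleGraph (Fin n ⊕ W)}
  (hind : ∀ u v : Fin n, H.Adj (inl u) (inl v) ↔ (pathGraph n).Adj u v)
include hind

theorem four_le_radius_of_isEmpty [IsEmpty W] (hn : 9 ≤ n) : 4 ≤ H.radius := by
  have hpath : ((8 : ℕ) : ℕ∞) ≤ H.edist (inl ⟨0, by omega⟩) (inl ⟨8, by omega⟩) := by
    refine natCast_le_edist_of_adj_le_succ (Sum.elim Fin.val isEmptyElim) ?_ rfl
    rintro (u | u) (v | v) h <;> try exact isEmptyElim ‹W›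
    have := pathGraph_adj.mp ((hind u v).mp h)
    simp only [Sum.elim_inl]
    omega
  by_contra! h
  have h3 : H.radius ≤ 3 := Order.le_of_lt_add_one h
  have h6 : H.ediam ≤ 2 * 3 := H.ediam_le_two_mul_radius.trans (by gcongr)
  have := (hpath.trans edist_le_ediam).trans h6
  norm_num at this

section FarVertex

variable {w : W} {z : Fin n} (hz : 2 < H.edist (inr w) (inl z))
include hz

theorem two_le_dist_of_adj {a : Fin n} (ha : H.Adj (inr w) (inl a)) : 2 ≤ Nat.dist z a := by
  by_contra! h
  have haz : H.edist (inl a) (inl z) ≤ 1 := by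
    refine edist_le_one_iff_adj_or_eq.mpr ?_
    rw [hind, pathGraph_adj, inl.injEq, Fin.ext_iff]
    unfold Nat.dist at h
    omega
  have := hz.trans_le (H.edist_triangle.trans (add_le_add (edist_eq_one_iff_adj.mpr ha).le haz))
  norm_num at this

theorem four_le_edist_of_four_le_dist [Subsingleton W] {v : Fin n} (hv : 4 ≤ Nat.dist z v) :
    4 ≤ H.edist (inl z) (inl v) := by
  let φ : Fin n ⊕ W → ℕ := Sum.elim (fun t => min (Nat.dist z t) 4) fun _ => 3
  have hφ : ∀ x y, H.Adj x y → φ y ≤ φ x + 1 := by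
    rintro (u | u) (v | v) h
    · have := pathGraph_adj.mp ((hind u v).mp h)
      simp only [φ, Sum.elim_inl, Nat.dist]
      omega
    · have := two_le_dist_of_adj hind hz (Subsingleton.elim w v ▸ h.symm)
      simp only [φ, Sum.elim_inl, Sum.elim_inr]
      omega
    · simp [φ]
    · simp [φ]
  have := natCast_le_edist_of_adj_le_succ φ hφ (s := inl z) (t := inl v) (by simp [φ])
  simpa [φ, show min (Nat.dist z v) 4 = 4 by omega] using this

end FarVertex

theorem two_lt_ncard_compl_center [Subsingleton W] (w : W) (hn : 9 ≤ n) (hrad : H.radius = 3) :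
    2 < H.centerᶜ.ncard := by
  have hlt : 2 < H.eccent (inr w) :=
    lt_of_lt_of_le (by rw [hrad]; norm_num) H.radius_le_eccent
  obtain ⟨x | w', hx⟩ := lt_iSup_iff.mp hlt
  swap
  · simp [Subsingleton.elim w' w] at hx
  have noncentral : ∀ u, 4 ≤ H.eccent u → u ∈ H.centerᶜ := fun u hu hc => by
    rw [mem_center_iff, hrad] at hc
    rw [hc] at hu
    norm_num at hu
  obtain ⟨v₁, v₂, hne, h₁, h₂⟩ := exists_pair_four_le_dist hn x
  have far : ∀ v : Fin n, 4 ≤ Nat.dist x v →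
      (inl v : Fin n ⊕ W) ∈ H.centerᶜ ∧ (inl x : Fin n ⊕ W) ≠ inl v := fun v hv =>
    ⟨noncentral _ ((four_le_edist_of_four_le_dist hind hx hv).trans_eq H.edist_comm |>.trans
      edist_le_eccent), fun h => by rw [inl.inj h, Nat.dist_self] at hv; omega⟩
  refine (Set.two_lt_ncard_iff).mpr ⟨inl x, inl v₁, inl v₂,
    noncentral _ ((four_le_edist_of_four_le_dist hind hx h₁).trans edist_le_eccent),
    (far v₁ h₁).1, (far v₂ h₂).1, (far v₁ h₁).2, (far v₂ h₂).2, fun h => hne (inl.inj h)⟩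

end PathPlusFewVertices

/-- For every integer `n ≥ 9`, the 3-ASC index of the path `P_n` satisfies
`θ_3(P_n) ≥ 2`. -/
theorem theta_three_path_ge (n : ℕ) (hn : 9 ≤ n) :
    2 ≤ theta 3 (pathGraph n) := by
  refine le_csInf ⟨7, exists_isASC_induced_extension _ _ (by norm_num) isASC_cycleSixPendant⟩ ?_
  rintro k ⟨H, hH, hind⟩
  by_contra! hk
  interval_cases k
  · have := (isASC_iff.mp hH).2.1 ▸ four_le_radius_of_isEmpty hind hn
    norm_num at this
  · obtain ⟨-, hrad, hcard⟩ := isASC_iff.mp hH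
    have := two_lt_ncard_compl_center hind (0 : Fin 1) hn (by exact_mod_cast hrad)
    omega

end AscPaper
end
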